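/- arXiv:1001.1658 — 7 statements merged into one kernel-verified Lean document; each statement's English description precedes it below -/
import Mathlib

section
/- Let F be a finite field with q elements, and let m, n, T be positive integers. Let p be any probability mass function on the set F^{m×T} of m×T matrices over F, let X ~ p, let G be an n×m matrix over F chosen uniformly at random independently of X, and set Y = G·X. Then the mutual information between the matrices equals the mutual information between their row spaces: I(X;Y) = I(⟨X⟩;⟨Y⟩), where ⟨X⟩ and ⟨Y⟩ denote the F-linear spans of the rows of X and Y respectively. (In particular, the non-coherent matrix channel and the induced subspace channel have the same capacity.) -/
open Finset

/- Mutual information (in nats) between two finite-valued random variables `U` and `V`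
defined on a finite probability space with probability mass function `μ`. -/
open Classical in
noncomputable def mutualInfo {Ω A B : Type*} [Fintype Ω] (μ : Ω → ℝ) (U : Ω → A) (V : Ω → B) : ℝ :=
  ∑ ω : Ω, μ ω * Real.log
    ((∑ ω' : Ω, if U ω' = U ω ∧ V ω' = V ω then μ ω' else 0) /
     ((∑ ω' : Ω, if U ω' = U ω then μ ω' else 0) * (∑ ω' : Ω, if V ω' = V ω then μ ω' else 0)))

/-- The joint probability mass function on pairs `(X, G)` where `X` has pmf `p` and
the channel matrix `G` is uniform on `F^{n×m}`, independent of `X`. -/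
noncomputable def channelPMF (F : Type) [Field F] [Fintype F] (m n T : ℕ)
    (p : Matrix (Fin m) (Fin T) F → ℝ) :
    Matrix (Fin m) (Fin T) F × Matrix (Fin n) (Fin m) F → ℝ :=
  fun ω => p ω.1 / (Fintype.card (Matrix (Fin n) (Fin m) F) : ℝ)

/-!
For a fixed input `x`, the channel matrices `g` with `g * x = y` form a coset of the kernel of
`g ↦ g * x`, nonempty exactly when `⟨y⟩ ≤ ⟨x⟩`; so their number is
`q ^ (n * (m - dim ⟨x⟩))` or `0`, a function of the row spaces `⟨x⟩` and `⟨y⟩` alone.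
Consequently the information density `log (P(y | x) / P(y))` only depends on `(⟨x⟩, ⟨y⟩)`,
and passing to row spaces multiplies numerator and denominator of the density by the same
two factors `P(⟨X⟩ = ⟨x⟩) / P(X = x)` and `#{y' | ⟨y'⟩ = ⟨y⟩}`.
-/

open Classical

theorem sum_ite_comp_eq_mul {ι β : Type*} [Fintype ι] (φ : ι → β) (c : β) (w : ι → ℝ)
    (h : β → ℝ) :
    ∑ i, (if φ i = c then w i * h (φ i) else 0) =
      (∑ i, if φ i = c then w i else 0) * h c := by
  rw [sum_mul]
  refine sum_congr rfl fun i _ => ?_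
  split_ifs with hi
  · rw [hi]
  · rw [zero_mul]

namespace Matrix

variable {K : Type*} [Field K] {m n o : Type*} [Fintype m]

theorem span_range_eq_range_vecMulLinear (x : Matrix m o K) :
    Submodule.span K (Set.range x) = LinearMap.range x.vecMulLinear :=
  (range_vecMulLinear x).symm

theorem mul_eq_iff_forall_vecMul_eq (g : Matrix n m K) (x : Matrix m o K) (y : Matrix n o K) :
    g * x = y ↔ ∀ i, g i ᵥ* x = y i := by
  simp only [← mul_apply_eq_vecMul]
  exact ⟨fun h i => h ▸ rfl, funext⟩

theorem exists_mul_eq_iff_span_le (x : Matrix m o K) (y : Matrix n o K) :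
    (∃ g : Matrix n m K, g * x = y) ↔
      Submodule.span K (Set.range y) ≤ Submodule.span K (Set.range x) := by
  rw [Submodule.span_le, span_range_eq_range_vecMulLinear]
  constructor
  · rintro ⟨g, rfl⟩ _ ⟨i, rfl⟩
    exact ⟨g i, (mul_apply_eq_vecMul g x i).symm⟩
  · intro h
    choose g hg using fun i => h ⟨i, rfl⟩
    exact ⟨of g, (mul_eq_iff_forall_vecMul_eq _ x y).2 hg⟩

theorem finrank_ker_vecMulLinear (x : Matrix m o K) :
    Module.finrank K (LinearMap.ker x.vecMulLinear) =
      Fintype.card m - Module.finrank K (Submodule.span K (Set.range x)) := by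
  have := x.vecMulLinear.finrank_range_add_finrank_ker
  rw [Module.finrank_fintype_fun_eq_card] at this
  rw [span_range_eq_range_vecMulLinear]
  omega

theorem card_filter_mul_eq_zero [Fintype n] [DecidableEq n] [DecidableEq m] [Fintype K]
    (x : Matrix m o K) :
    #{g : Matrix n m K | g * x = 0} =
      Fintype.card K ^ (Fintype.card n *
        (Fintype.card m - Module.finrank K (Submodule.span K (Set.range x)))) := by
  have e : {g : Matrix n m K // g * x = 0} ≃ (n → LinearMap.ker x.vecMulLinear) :=
    (Equiv.subtypeEquivRight fun g => mul_eq_iff_forall_vecMul_eq g x 0).trans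
      (Equiv.subtypePiEquivPi (p := fun _ v => v ∈ LinearMap.ker x.vecMulLinear))
  rw [← Fintype.card_subtype, Fintype.card_congr e, Fintype.card_pi, prod_const, card_univ,
    Module.card_eq_pow_finrank (K := K) (V := LinearMap.ker x.vecMulLinear),
    finrank_ker_vecMulLinear, ← pow_mul, Nat.mul_comm]

theorem card_filter_mul_eq [Fintype n] [DecidableEq n] [DecidableEq m] [Fintype K]
    (x : Matrix m o K) (y : Matrix n o K) :
    #{g : Matrix n m K | g * x = y} =
      if Submodule.span K (Set.range y) ≤ Submodule.span K (Set.range x) then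
        Fintype.card K ^ (Fintype.card n *
          (Fintype.card m - Module.finrank K (Submodule.span K (Set.range x))))
      else 0 := by
  split_ifs with h
  · rw [← card_filter_mul_eq_zero x]
    obtain ⟨g, rfl⟩ := (exists_mul_eq_iff_span_le x y).2 h
    exact AddMonoidHom.card_fiber_eq_of_mem_range (mulRightLinearMap n K x) ⟨g, rfl⟩
      ⟨0, Matrix.zero_mul x⟩
  · rw [card_eq_zero, filter_eq_empty_iff]
    exact fun g _ hg => h ((exists_mul_eq_iff_span_le x y).1 ⟨g, hg⟩)

end Matrix

section UniformChannel

variable {X G Y : Type*} [Fintype G] [Fintype Y] (p : X → ℝ) (f : G → X → Y)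

theorem sum_comp_eq_sum_card_fiber_mul (x : X) (φ : Y → ℝ) :
    ∑ g, φ (f g x) = ∑ y, (#{g | f g x = y} : ℝ) * φ y := by
  rw [← sum_fiberwise' univ (f · x) φ]
  simp only [sum_const, nsmul_eq_mul]

theorem sum_uniform_ite_fst [Fintype X] [Nonempty G] (P : X → Prop) :
    ∑ ω : X × G, (if P ω.1 then p ω.1 / Fintype.card G else 0) =
      ∑ x, if P x then p x else 0 := by
  rw [Fintype.sum_prod_type]
  refine sum_congr rfl fun x _ => ?_
  simp only [Finset.sum_const, card_univ, nsmul_eq_mul]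
  split_ifs
  · field_simp
  · simp

theorem sum_uniform_ite_fst_and_channel [Fintype X] (P : X → Prop) (R : Y → Prop) :
    ∑ ω : X × G, (if P ω.1 ∧ R (f ω.2 ω.1) then p ω.1 / Fintype.card G else 0) =
      (∑ x, if P x then p x * ∑ y, if R y then (#{g | f g x = y} : ℝ) else 0 else 0) /
        Fintype.card G := by
  rw [Fintype.sum_prod_type, sum_div]
  refine sum_congr rfl fun x _ => ?_
  split_ifs with hx
  · simp only [hx, true_and]
    rw [sum_comp_eq_sum_card_fiber_mul f x (fun y => if R y then p x / Fintype.card G else 0),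
      mul_sum, sum_div]
    refine sum_congr rfl fun y _ => ?_
    split_ifs <;> ring
  · simp [hx]

theorem sum_uniform_ite_channel [Fintype X] (R : Y → Prop) :
    ∑ ω : X × G, (if R (f ω.2 ω.1) then p ω.1 / Fintype.card G else 0) =
      (∑ x, p x * ∑ y, if R y then (#{g | f g x = y} : ℝ) else 0) / Fintype.card G := by
  simpa using sum_uniform_ite_fst_and_channel p f (fun _ => True) R

theorem mutualInfo_uniform_channel_eq_of_card_fiber {S B : Type*} [Fintype X] [Nonempty G]
    (s : X → S) (t : Y → B) (κ : S → B → ℕ) (hp : ∀ x, 0 ≤ p x)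
    (hκ : ∀ x y, #{g | f g x = y} = κ (s x) (t y)) :
    mutualInfo (fun ω : X × G => p ω.1 / Fintype.card G) Prod.fst (fun ω => f ω.2 ω.1) =
      mutualInfo (fun ω : X × G => p ω.1 / Fintype.card G) (fun ω => s ω.1)
        (fun ω => t (f ω.2 ω.1)) := by
  unfold mutualInfo
  refine sum_congr rfl fun ⟨x, g⟩ _ => ?_
  rcases (hp x).eq_or_lt with hx | hx
  · simp [← hx]
  dsimp only
  rw [sum_uniform_ite_fst_and_channel p f (· = x) (· = f g x), sum_uniform_ite_fst p (· = x),
    sum_uniform_ite_channel p f (· = f g x),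
    sum_uniform_ite_fst_and_channel p f (s · = s x) (t · = t (f g x)),
    sum_uniform_ite_fst p (s · = s x), sum_uniform_ite_channel p f (t · = t (f g x))]
  simp only [hκ]
  set y := f g x
  set cB : ℝ := Nat.cast #{y' | t y' = t y}
  have hfiber (c : S) :
      ∑ y', (if t y' = t y then (κ c (t y') : ℝ) else 0) = cB * κ c (t y) := by
    simpa using sum_ite_comp_eq_mul t (t y) 1 (fun b => (κ c b : ℝ))
  simp only [hfiber, sum_ite_eq', mem_univ, if_true]
  rw [sum_ite_comp_eq_mul s (s x) p (fun a => cB * κ a (t y))]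
  have hcB : cB ≠ 0 := Nat.cast_ne_zero.2 (card_pos.2 ⟨y, by simp⟩).ne'
  have hπ : (∑ x', if s x' = s x then p x' else 0) ≠ 0 := by
    refine (sum_pos' (fun x' _ => ?_) ⟨x, mem_univ x, by simpa using hx⟩).ne'
    split_ifs
    exacts [hp x', le_rfl]
  -- both densities equal `κ (s x) (t y) / ∑ x', p x' * κ (s x') (t y)`
  congr 2
  field_simp
  simp_rw [mul_assoc cB, ← mul_sum]
  rw [mul_comm _ cB, mul_div_mul_left _ _ hcB]

end UniformChannel

theorem matrix_channel_subspace_equivalence_general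
    (F : Type) [Field F] [Fintype F] (m n T : ℕ)
    (p : Matrix (Fin m) (Fin T) F → ℝ)
    (hp0 : ∀ x, 0 ≤ p x) :
    mutualInfo (channelPMF F m n T p)
        (fun ω => ω.1)
        (fun ω => ω.2 * ω.1)
      =
    mutualInfo (channelPMF F m n T p)
        (fun ω => Submodule.span F (Set.range ω.1))
        (fun ω => Submodule.span F (Set.range (ω.2 * ω.1))) :=
  mutualInfo_uniform_channel_eq_of_card_fiber p (fun g x => g * x)
    (fun x => Submodule.span F (Set.range x))
    (fun y : Matrix (Fin n) (Fin T) F => Submodule.span F (Set.range y))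
    (fun A B => if B ≤ A then Fintype.card F ^ (n * (m - Module.finrank F A)) else 0) hp0
    fun x y => by simpa using Matrix.card_filter_mul_eq x y

/-- The mutual information between the input and output matrices of the non-coherent
matrix channel equals the mutual information between their row spaces. -/
theorem matrix_channel_subspace_equivalence
    (F : Type) [Field F] [Fintype F] (m n T : ℕ)
    (hm : 0 < m) (hn : 0 < n) (hT : 0 < T)
    (p : Matrix (Fin m) (Fin T) F → ℝ)
    (hp0 : ∀ x, 0 ≤ p x) (hp1 : ∑ x, p x = 1) :
    mutualInfo (channelPMF F m n T p)
        (fun ω => ω.1)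
        (fun ω => ω.2 * ω.1)
      =
    mutualInfo (channelPMF F m n T p)
        (fun ω => Submodule.span F (Set.range ω.1))
        (fun ω => Submodule.span F (Set.range (ω.2 * ω.1))) :=
  matrix_channel_subspace_equivalence_general F m n T p hp0
end

section
/- Let F be a finite field with q elements, let m, n, T be positive integers, and set h = min(m,n). The capacity of the non-coherent matrix channel is bounded above by the logarithm of the number of subspaces of F^T of dimension at most h: C_m(n,m,T) ≤ ln( Σ_{i=0}^{h} |Gr_F(T,i)| ). -/
open Finset

/- The capacity of the non-coherent matrix channel `Y = G·X`, where the input `X` ranges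
over `F^{m×T}` with an arbitrary pmf `p` and `G` is uniform on `F^{n×m}`, independent of `X`:
the supremum, over input distributions, of the mutual information `I(X;Y)`. -/
noncomputable def capacityM (F : Type) [Field F] [Fintype F] (n m T : ℕ) : ℝ :=
  sSup { I : ℝ | ∃ p : Matrix (Fin m) (Fin T) F → ℝ,
    (∀ x, 0 ≤ p x) ∧ (∑ x, p x = 1) ∧
    I = mutualInfo
        (fun ω : Matrix (Fin m) (Fin T) F × Matrix (Fin n) (Fin m) F =>
          p ω.1 / (Fintype.card (Matrix (Fin n) (Fin m) F) : ℝ))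
        (fun ω => ω.1) (fun ω => ω.2 * ω.1) }

/- `grCard F N d` is the number of `d`-dimensional `F`-linear subspaces of `F^N`. -/
noncomputable def grCard (F : Type) [Field F] [Fintype F] (N d : ℕ) : ℕ :=
  Nat.card {W : Submodule F (Fin N → F) // Module.finrank F ↥W = d}

/-! Let `S = rowSpace Y`. For a fixed input `x`, the solutions `g` of `g * x = y` form a coset
of one subgroup, so their number depends only on whether `y` is reachable from `x`, and reachable
outputs with the same row space are equally likely given `x`. Hence
`P(Y = y | X = x) ≤ P(Y = y | S = rowSpace y)`, which gives `I(X;Y) ≤ H(S)` termwise; and `H(S)`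
is at most the logarithm of the number of values of `S`, subspaces of `F^T` of dimension at most
`min m n` (Gibbs' inequality, via `log t ≤ t - 1`). -/

open Classical

section Information

variable {Ω C : Type*} [Fintype Ω] (μ : Ω → ℝ)

noncomputable def probOf (P : Ω → Prop) [DecidablePred P] : ℝ :=
  ∑ ω, if P ω then μ ω else 0

noncomputable def entropy (S : Ω → C) : ℝ :=
  ∑ ω, μ ω * Real.log (probOf μ fun ω' => S ω' = S ω)⁻¹

variable {μ}

lemma probOf_pos (hμ : ∀ ω, 0 ≤ μ ω) {P : Ω → Prop} [DecidablePred P] {ω : Ω}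
    (hω : 0 < μ ω) (hP : P ω) : 0 < probOf μ P :=
  hω.trans_le <| by
    simpa [probOf, hP] using single_le_sum (f := fun ω' => if P ω' then μ ω' else 0)
      (fun ω' _ => by split_ifs <;> simp [hμ]) (mem_univ ω)

lemma mutualInfo_eq_sum_probOf {A B : Type*} (U : Ω → A) (V : Ω → B) :
    mutualInfo μ U V = ∑ ω, μ ω * Real.log (probOf μ (fun ω' => U ω' = U ω ∧ V ω' = V ω) /
      (probOf μ (fun ω' => U ω' = U ω) * probOf μ (fun ω' => V ω' = V ω))) :=
  rfl

theorem mutualInfo_le_entropy {A B : Type*} (hμ : ∀ ω, 0 ≤ μ ω) (U : Ω → A) (V : Ω → B)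
    (S : Ω → C)
    (hS : ∀ ω, probOf μ (fun ω' => U ω' = U ω ∧ V ω' = V ω) * probOf μ (fun ω' => S ω' = S ω)
      ≤ probOf μ (fun ω' => U ω' = U ω) * probOf μ (fun ω' => V ω' = V ω)) :
    mutualInfo μ U V ≤ entropy μ S := by
  rw [mutualInfo_eq_sum_probOf, entropy]
  refine sum_le_sum fun ω _ => ?_
  rcases (hμ ω).eq_or_lt with h0 | hω
  · simp [← h0]
  have hUV := probOf_pos hμ hω (P := fun ω' => U ω' = U ω ∧ V ω' = V ω) ⟨rfl, rfl⟩
  have hU := probOf_pos hμ hω (P := fun ω' => U ω' = U ω) rfl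
  have hV := probOf_pos hμ hω (P := fun ω' => V ω' = V ω) rfl
  have hS' := probOf_pos hμ hω (P := fun ω' => S ω' = S ω) rfl
  refine mul_le_mul_of_nonneg_left (Real.log_le_log (by positivity) ?_) hω.le
  rw [div_le_iff₀ (by positivity), inv_mul_eq_div, le_div_iff₀ hS']
  exact hS ω

theorem entropy_le_log_card (hμ : ∀ ω, 0 ≤ μ ω) (hμ1 : ∑ ω, μ ω = 1) (S : Ω → C)
    (s : Finset C) (hs : ∀ ω, S ω ∈ s) : entropy μ S ≤ Real.log s.card := by
  set K : ℝ := (s.card : ℝ)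
  set P : Ω → ℝ := fun ω => probOf μ fun ω' => S ω' = S ω
  have hK : 0 < K := by
    obtain ⟨ω, -, -⟩ := exists_ne_zero_of_sum_ne_zero (hμ1 ▸ one_ne_zero : ∑ ω, μ ω ≠ 0)
    exact Nat.cast_pos.2 (card_pos.2 ⟨_, hs ω⟩)
  -- each fibre of `S` carries total weight `∑ μ ω / P ω ≤ 1`
  have hfib : ∑ ω, μ ω / P ω ≤ K := by
    rw [← sum_fiberwise_of_maps_to (t := s) (g := S) fun ω _ => hs ω]
    refine (sum_le_sum (g := fun _ => (1 : ℝ)) fun c _ => ?_).trans (by simp [K])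
    have hc : ∀ ω ∈ ({ω | S ω = c} : Finset Ω), μ ω / P ω = μ ω / probOf μ (S · = c) := by
      intro ω hω
      simp only [P, (mem_filter.1 hω).2]
    rw [sum_congr rfl hc, ← sum_div, sum_filter]
    exact div_self_le_one _
  have hterm : ∀ ω, μ ω * Real.log (P ω)⁻¹ ≤ μ ω * Real.log K + μ ω / P ω / K - μ ω := by
    intro ω
    rcases (hμ ω).eq_or_lt with h0 | hω
    · simp [← h0]
    have hP : 0 < P ω := probOf_pos hμ hω (P := fun ω' => S ω' = S ω) rfl
    have hlog : Real.log (P ω)⁻¹ = Real.log K + Real.log (K * P ω)⁻¹ := by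
      rw [Real.log_inv, Real.log_inv, Real.log_mul hK.ne' hP.ne']
      ring
    have := Real.log_le_sub_one_of_pos (inv_pos.2 (mul_pos hK hP))
    calc μ ω * Real.log (P ω)⁻¹ ≤ μ ω * (Real.log K + ((K * P ω)⁻¹ - 1)) := by
          rw [hlog]; gcongr
      _ = _ := by field_simp; ring
  calc entropy μ S ≤ ∑ ω, (μ ω * Real.log K + μ ω / P ω / K - μ ω) :=
        sum_le_sum fun ω _ => hterm ω
    _ = Real.log K + (∑ ω, μ ω / P ω) / K - 1 := by
      rw [sum_sub_distrib, sum_add_distrib, ← sum_mul, ← sum_div, hμ1, one_mul]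
    _ ≤ Real.log K := by linarith [div_le_one_of_le₀ hfib hK.le]

end Information

section UniformChannel

variable {X G Y C : Type*} [Fintype X] [Fintype G] (p : X → ℝ)

lemma probOf_uniform (P : X × G → Prop) [DecidablePred P] :
    probOf (fun ω : X × G => p ω.1 / Fintype.card G) P =
      ∑ x, #{g | P (x, g)} * (p x / Fintype.card G) := by
  rw [probOf, Fintype.sum_prod_type]
  simp only [sum_ite, sum_const_zero, add_zero, sum_const, nsmul_eq_mul]

lemma probOf_uniform_fst_eq_and (x : X) (Q : X × G → Prop) [DecidablePred Q] :
    probOf (fun ω : X × G => p ω.1 / Fintype.card G) (fun ω => ω.1 = x ∧ Q ω) =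
      #{g | Q (x, g)} * (p x / Fintype.card G) := by
  rw [probOf_uniform, sum_eq_single x (fun x' _ hx' => by simp [hx']) (by simp)]
  simp

lemma sum_uniform_eq_sum [Nonempty G] : ∑ ω : X × G, p ω.1 / Fintype.card G = ∑ x, p x := by
  have hG : (Fintype.card G : ℝ) ≠ 0 := Nat.cast_ne_zero.2 Fintype.card_ne_zero
  simp [Fintype.sum_prod_type, mul_div_cancel₀ _ hG]

theorem mutualInfo_uniform_le_entropy (hp : ∀ x, 0 ≤ p x) (f : G → X → Y) (σ : Y → C)
    (hcount : ∀ x x' g, #{g' | f g' x = f g x} * #{g' | σ (f g' x') = σ (f g x)} ≤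
      Fintype.card G * #{g' | f g' x' = f g x}) :
    mutualInfo (fun ω : X × G => p ω.1 / Fintype.card G) (fun ω => ω.1) (fun ω => f ω.2 ω.1) ≤
      entropy (fun ω : X × G => p ω.1 / Fintype.card G) (fun ω => σ (f ω.2 ω.1)) := by
  set w : X → ℝ := fun x => p x / Fintype.card G
  have hw : ∀ x, 0 ≤ w x := fun x => div_nonneg (hp x) (Nat.cast_nonneg _)
  refine mutualInfo_le_entropy (fun ω : X × G => hw ω.1) _ _ _ fun ⟨x, g⟩ => ?_
  have hU := probOf_uniform_fst_eq_and p x (fun _ : X × G => True)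
  simp only [and_true, filter_true_of_mem fun _ _ => trivial, card_univ] at hU
  rw [probOf_uniform_fst_eq_and p x (fun ω => f ω.2 ω.1 = f g x), hU, probOf_uniform,
    probOf_uniform, mul_sum, mul_sum]
  refine sum_le_sum fun x' _ => ?_
  have h := (Nat.cast_le (α := ℝ)).2 (hcount x x' g)
  push_cast at h
  calc _ = (#{g' | f g' x = f g x} * #{g' | σ (f g' x') = σ (f g x)} : ℝ) * (w x * w x') := by
        simp only [w]; ring
    _ ≤ (Fintype.card G * #{g' | f g' x' = f g x} : ℝ) * (w x * w x') := by
        gcongr; exact mul_nonneg (hw x) (hw x')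
    _ = _ := by simp only [w]; ring

end UniformChannel

namespace Matrix

variable {R : Type*} [CommRing R] {l m n : Type*} [Fintype l] [Fintype m]

def rowSpace (A : Matrix m n R) : Submodule R (n → R) :=
  LinearMap.range A.vecMulLinear

lemma row_mem_rowSpace (A : Matrix m n R) (i : m) : A i ∈ A.rowSpace :=
  ⟨Pi.single i 1, single_one_vecMul i A⟩

lemma rowSpace_le_iff_exists_mul_eq {A : Matrix m n R} {C : Matrix l n R} :
    C.rowSpace ≤ A.rowSpace ↔ ∃ B : Matrix l m R, B * A = C := by
  constructor
  · intro h
    choose B hB using fun i => h (C.row_mem_rowSpace i)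
    exact ⟨of B, ext fun i j => congrFun (hB i) j⟩
  · rintro ⟨B, rfl⟩ _ ⟨c, rfl⟩
    exact ⟨c ᵥ* B, vecMul_vecMul c B A⟩

lemma finrank_rowSpace {F : Type*} [Field F] [Fintype n] (A : Matrix m n F) :
    Module.finrank F A.rowSpace = A.rank := by
  rw [rowSpace, ← mulVecLin_transpose, ← rank_transpose]
  rfl

variable [Fintype n] [Fintype R]

lemma card_mul_eq_le_of_rowSpace_le (A : Matrix m n R) {C C' : Matrix l n R}
    (h : C'.rowSpace ≤ C.rowSpace) :
    #{B : Matrix l m R | B * A = C} ≤ #{B : Matrix l m R | B * A = C'} := by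
  by_cases hC : ∃ B₀ : Matrix l m R, B₀ * A = C
  · obtain ⟨B₀, hB₀⟩ := hC
    obtain ⟨B₁, hB₁⟩ :=
      rowSpace_le_iff_exists_mul_eq.1 (h.trans (rowSpace_le_iff_exists_mul_eq.2 ⟨B₀, hB₀⟩))
    refine card_le_card_of_injOn (fun B : Matrix l m R => B + (B₁ - B₀)) (fun B hB => ?_)
      (fun B _ B' _ => add_right_cancel)
    simp only [coe_filter, mem_univ, true_and, Set.mem_ofPred_eq] at hB ⊢
    rw [Matrix.add_mul, Matrix.sub_mul, hB, hB₀, hB₁]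
    abel
  · rw [filter_false_of_mem fun B _ hB => hC ⟨B, hB⟩]
    simp

lemma card_rowSpace_mul_eq (A : Matrix m n R) (C : Matrix l n R) :
    #{B : Matrix l m R | (B * A).rowSpace = C.rowSpace} =
      #{C' : Matrix l n R | C'.rowSpace = C.rowSpace} * #{B : Matrix l m R | B * A = C} := by
  rw [card_eq_sum_card_fiberwise (f := fun B : Matrix l m R => B * A)
    (t := {C' | C'.rowSpace = C.rowSpace}) (fun B hB => by simpa using hB),
    ← smul_eq_mul, ← sum_const]
  refine sum_congr rfl fun C' hC' => ?_
  replace hC' : C'.rowSpace = C.rowSpace := (mem_filter.1 hC').2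
  rw [filter_filter, filter_congr fun (B : Matrix l m R) _ =>
    and_iff_right_of_imp fun (hB : B * A = C') => by rw [hB, hC']]
  exact le_antisymm (card_mul_eq_le_of_rowSpace_le A hC'.ge)
    (card_mul_eq_le_of_rowSpace_le A hC'.le)

lemma card_mul_eq_mul_card_rowSpace_mul_eq_le (A A' : Matrix m n R) (B : Matrix l m R) :
    #{B' : Matrix l m R | B' * A = B * A} *
        #{B' : Matrix l m R | (B' * A').rowSpace = (B * A).rowSpace} ≤
      Fintype.card (Matrix l m R) * #{B' : Matrix l m R | B' * A' = B * A} := by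
  rw [card_rowSpace_mul_eq, ← mul_assoc, mul_comm #{B' : Matrix l m R | B' * A = B * A},
    ← card_rowSpace_mul_eq]
  exact Nat.mul_le_mul_right _ ((card_filter_le _ _).trans_eq card_univ)

end Matrix

open Module Matrix

lemma sum_grCard_eq_card (F : Type) [Field F] [Fintype F] (N h : ℕ) :
    ∑ i ∈ range (h + 1), grCard F N i = #{W : Submodule F (Fin N → F) | finrank F W ≤ h} := by
  rw [card_eq_sum_card_fiberwise (f := fun W : Submodule F (Fin N → F) => finrank F W)
    (t := range (h + 1)) (fun W hW => by simpa [Nat.lt_succ_iff] using hW)]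
  refine sum_congr rfl fun i hi => ?_
  rw [grCard, Nat.card_eq_fintype_card, Fintype.card_subtype, filter_filter]
  congr 1
  ext W
  simp only [mem_filter, mem_univ, true_and, iff_and_self]
  rintro rfl
  exact Nat.lt_succ_iff.1 (mem_range.1 hi)

theorem capacity_le_log_sphere_general (F : Type) [Field F] [Fintype F] (m n T : ℕ) :
    capacityM F n m T ≤ Real.log (∑ i ∈ Finset.range (min m n + 1), (grCard F T i : ℝ)) := by
  rw [← Nat.cast_sum, sum_grCard_eq_card]
  refine Real.sSup_le ?_ (Real.log_nonneg (Nat.one_le_cast.2 (card_pos.2 ⟨⊥, by simp⟩)))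
  rintro _ ⟨p, hp0, hp1, rfl⟩
  have hrank (x : Matrix (Fin m) (Fin T) F) (g : Matrix (Fin n) (Fin m) F) :
      finrank F (g * x).rowSpace ≤ min m n := by
    rw [finrank_rowSpace, min_comm]
    exact (rank_mul_le g x).trans (min_le_min (rank_le_height g) (rank_le_height x))
  calc _ ≤ entropy _ fun ω : Matrix (Fin m) (Fin T) F × Matrix (Fin n) (Fin m) F =>
          (ω.2 * ω.1).rowSpace :=
        -- `convert` only reconciles the decidability instances of the filters
        mutualInfo_uniform_le_entropy p hp0 (fun g x => g * x) rowSpace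
          fun x x' g => by convert card_mul_eq_mul_card_rowSpace_mul_eq_le x x' g
    _ ≤ _ := entropy_le_log_card (fun ω => div_nonneg (hp0 _) (Nat.cast_nonneg _))
          ((sum_uniform_eq_sum p).trans hp1) _ _ fun ω => by simpa using hrank ω.1 ω.2

/-- The capacity of the non-coherent matrix channel is at most the logarithm of the
number of subspaces of `F^T` of dimension at most `h = min m n`. -/
theorem capacity_le_log_sphere (F : Type) [Field F] [Fintype F] (m n T : ℕ)
    (hm : 0 < m) (hn : 0 < n) (hT : 0 < T) :
    capacityM F n m T ≤ Real.log (∑ i ∈ Finset.range (min m n + 1), (grCard F T i : ℝ)) :=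
  capacity_le_log_sphere_general F m n T
end

section
/- Let F be a finite field, let T, δ1, δ2 be nonnegative integers with δ1, δ2 ≤ T, and let C1 ⊆ Gr_F(T,δ1) and C2 ⊆ Gr_F(T,δ2) be nonempty sets of subspaces such that the subspace-sum map (π1, π2) ↦ π1 + π2 is injective on C1 × C2 (i.e., any two distinct pairs produce distinct sums). Then |C1| ≤ Σ_{j=0}^{δ1} |Gr_F(T−δ2, j)| and |C2| ≤ Σ_{j=0}^{δ2} |Gr_F(T−δ1, j)|. -/
/-!
Fix `π₂ ∈ C2`. Injectivity of the sum map makes `π ↦ π ⊔ π₂` injective on `C1`, i.e. `π` is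
determined by its image in `F^T / π₂ ≅ F^(T - δ2)`, a subspace of dimension at most `δ1`.
Symmetrically for `C2`.
-/

open Finset

theorem Nat.card_subtype_le_eq_sum {α : Type*} [Finite α] (f : α → ℕ) (d : ℕ) :
    Nat.card {a // f a ≤ d} = ∑ j ∈ range (d + 1), Nat.card {a // f a = j} := by
  classical
  have := Fintype.ofFinite α
  simp only [Nat.card_eq_fintype_card, Fintype.card_subtype]
  rw [card_eq_sum_card_fiberwise (f := f) (t := range (d + 1))
    (fun a ha => by simpa [Nat.lt_succ_iff] using ha)]
  refine sum_congr rfl fun j hj => congrArg card ?_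
  ext a
  have := mem_range.mp hj
  simp only [mem_filter, mem_univ, true_and]
  omega

theorem Submodule.injOn_map_of_injOn_sup_ker {R M N : Type*} [Ring R] [AddCommGroup M]
    [Module R M] [AddCommGroup N] [Module R N] (g : M →ₗ[R] N) {S : Set (Submodule R M)}
    (h : Set.InjOn (· ⊔ LinearMap.ker g) S) : Set.InjOn (Submodule.map g) S :=
  fun a ha b hb hab => h ha hb <| by simpa only [Submodule.comap_map_eq] using congrArg (Submodule.comap g) hab

theorem Submodule.exists_linearMap_ker_eq {K V : Type*} [Field K] [AddCommGroup V] [Module K V]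
    [FiniteDimensional K V] (W : Submodule K V) {n : ℕ}
    (hn : Module.finrank K W + n = Module.finrank K V) :
    ∃ g : V →ₗ[K] (Fin n → K), LinearMap.ker g = W := by
  have e : (V ⧸ W) ≃ₗ[K] (Fin n → K) := LinearEquiv.ofFinrankEq _ _ <| by
    have := W.finrank_quotient_add_finrank
    simp only [Module.finrank_fin_fun]
    omega
  exact ⟨e.toLinearMap ∘ₗ W.mkQ, by
    rw [LinearMap.ker_comp, LinearEquiv.ker, Submodule.comap_bot, Submodule.ker_mkQ]⟩

theorem card_le_sum_grCard_of_injOn_sup {F : Type} [Field F] [Fintype F] {T δ₁ δ₂ : ℕ}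
    {C : Set (Submodule F (Fin T → F))} (hC : ∀ π ∈ C, Module.finrank F π = δ₁)
    {W : Submodule F (Fin T → F)} (hW : Module.finrank F W = δ₂)
    (hinj : Set.InjOn (· ⊔ W) C) :
    Nat.card C ≤ ∑ j ∈ range (δ₁ + 1), grCard F (T - δ₂) j := by
  obtain ⟨g, hg⟩ := W.exists_linearMap_ker_eq (n := T - δ₂) <| by
    have := W.finrank_le
    simp only [Module.finrank_fin_fun] at this ⊢
    omega
  rw [← hg] at hinj
  calc Nat.card C
      ≤ Nat.card {U : Submodule F (Fin (T - δ₂) → F) // Module.finrank F U ≤ δ₁} := by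
        rw [Nat.card_coe_set_eq]
        exact Set.ncard_le_ncard_of_injOn _
          (fun π hπ => (hC π hπ).symm ▸ Submodule.finrank_map_le g π)
          (Submodule.injOn_map_of_injOn_sup_ker g hinj)
    _ = ∑ j ∈ range (δ₁ + 1), grCard F (T - δ₂) j := Nat.card_subtype_le_eq_sum _ _

theorem coloring_bound_general (F : Type) [Field F] [Fintype F] (T δ1 δ2 : ℕ)
    (C1 C2 : Set (Submodule F (Fin T → F)))
    (hC1 : ∀ π ∈ C1, Module.finrank F ↥π = δ1)
    (hC2 : ∀ π ∈ C2, Module.finrank F ↥π = δ2)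
    (hne1 : C1.Nonempty) (hne2 : C2.Nonempty)
    (hinj : Set.InjOn
      (fun p : Submodule F (Fin T → F) × Submodule F (Fin T → F) => p.1 ⊔ p.2)
      (C1 ×ˢ C2)) :
    Nat.card C1 ≤ ∑ j ∈ Finset.range (δ1 + 1), grCard F (T - δ2) j ∧
    Nat.card C2 ≤ ∑ j ∈ Finset.range (δ2 + 1), grCard F (T - δ1) j := by
  obtain ⟨π₁, hπ₁⟩ := hne1
  obtain ⟨π₂, hπ₂⟩ := hne2
  refine ⟨card_le_sum_grCard_of_injOn_sup hC1 (hC2 π₂ hπ₂) fun a ha b hb hab => ?_,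
    card_le_sum_grCard_of_injOn_sup hC2 (hC1 π₁ hπ₁) fun a ha b hb hab => ?_⟩
  · exact congrArg Prod.fst <| hinj (Set.mk_mem_prod ha hπ₂) (Set.mk_mem_prod hb hπ₂) hab
  · refine congrArg Prod.snd <| hinj (Set.mk_mem_prod hπ₁ ha) (Set.mk_mem_prod hπ₁ hb) ?_
    simpa only [sup_comm] using hab

/-- If `C1 ⊆ Gr_F(T,δ1)` and `C2 ⊆ Gr_F(T,δ2)` are nonempty families of subspaces on which
the subspace-sum map `(π1, π2) ↦ π1 + π2` is injective, then
`|C1| ≤ Σ_{j=0}^{δ1} |Gr_F(T−δ2, j)|` and `|C2| ≤ Σ_{j=0}^{δ2} |Gr_F(T−δ1, j)|`. -/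
theorem coloring_bound (F : Type) [Field F] [Fintype F] (T δ1 δ2 : ℕ)
    (hδ1 : δ1 ≤ T) (hδ2 : δ2 ≤ T)
    (C1 C2 : Set (Submodule F (Fin T → F)))
    (hC1 : ∀ π ∈ C1, Module.finrank F ↥π = δ1)
    (hC2 : ∀ π ∈ C2, Module.finrank F ↥π = δ2)
    (hne1 : C1.Nonempty) (hne2 : C2.Nonempty)
    (hinj : Set.InjOn
      (fun p : Submodule F (Fin T → F) × Submodule F (Fin T → F) => p.1 ⊔ p.2)
      (C1 ×ˢ C2)) :
    Nat.card C1 ≤ ∑ j ∈ Finset.range (δ1 + 1), grCard F (T - δ2) j ∧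
    Nat.card C2 ≤ ∑ j ∈ Finset.range (δ2 + 1), grCard F (T - δ1) j :=
  coloring_bound_general F T δ1 δ2 C1 C2 hC1 hC2 hne1 hne2 hinj
end

section
/- Let m1, m2 ≥ 1 and T be integers with T ≥ 2(m1+m2)+2, and fix a real number q ≥ 2. For nonnegative integers d1 ≤ m1, d2 ≤ m2 define R1(d1,d2) = d1(T−d1−d2)·log2 q, R2(d1,d2) = d2(T−d1−d2)·log2 q, the rectangle R(d1,d2) = {(x,y) ∈ ℝ² : 0 ≤ x ≤ R1(d1,d2), 0 ≤ y ≤ R2(d1,d2)}, and R_col = convex hull of the union of R(d1,d2) over all 0 ≤ d1 ≤ m1, 0 ≤ d2 ≤ m2. Then the set of extreme points of R_col other than the origin (0,0) is exactly { (R1(d1,d2), R2(d1,d2)) : (d1,d2) ∈ D̃ }, where D̃ = {(d1,m2) : 0 ≤ d1 ≤ m1} ∪ {(m1,d2) : 0 ≤ d2 ≤ m2}. -/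
open Finset

/- The rate pair `(R1(d1,d2), R2(d1,d2))` with
`Ri(d1,d2) = di·(T−d1−d2)·log2 q`. -/
noncomputable def rate1 (T : ℕ) (q : ℝ) (d1 d2 : ℕ) : ℝ :=
  (d1 : ℝ) * ((T : ℝ) - (d1 : ℝ) - (d2 : ℝ)) * Real.logb 2 q

noncomputable def rate2 (T : ℕ) (q : ℝ) (d1 d2 : ℕ) : ℝ :=
  (d2 : ℝ) * ((T : ℝ) - (d1 : ℝ) - (d2 : ℝ)) * Real.logb 2 q

/- The rectangle `R(d1,d2) = {(x,y) : 0 ≤ x ≤ R1(d1,d2), 0 ≤ y ≤ R2(d1,d2)}`. -/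
noncomputable def rateRect (T : ℕ) (q : ℝ) (d1 d2 : ℕ) : Set (ℝ × ℝ) :=
  {p : ℝ × ℝ | 0 ≤ p.1 ∧ p.1 ≤ rate1 T q d1 d2 ∧ 0 ≤ p.2 ∧ p.2 ≤ rate2 T q d1 d2}

/- The coloring outer bound region: the convex hull of the union of the rectangles
`R(d1,d2)` over all `0 ≤ d1 ≤ m1`, `0 ≤ d2 ≤ m2`. -/
noncomputable def rateRegionCol (T m1 m2 : ℕ) (q : ℝ) : Set (ℝ × ℝ) :=
  convexHull ℝ (⋃ (d1 : ℕ) (_ : d1 ≤ m1) (d2 : ℕ) (_ : d2 ≤ m2), rateRect T q d1 d2)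

/-!
Write `P(d1,d2) = (R1(d1,d2), R2(d1,d2))`. An extreme point of a convex hull lies in the generating
set, and an extreme point of `R_col` lying in a rectangle `R(e1,e2)` is a corner of that rectangle.
No rectangle reaches beyond `P(0,m2)` on the `y`-axis or beyond `P(m1,0)` on the `x`-axis, so these
are the only extreme points on the axes other than the origin. A corner `P(e1,e2)` with
`0 < e1 < m1` and `0 < e2 < m2` is the midpoint of `P(e1,e2) ± δ(1,1)`, both in `R_col`.
Conversely, `P(m1,d2)` is the unique maximiser over the rectangles of the linear functional with
normal `(T - m1 - 2d2, m1)`, the normal at `d = d2` of the curve `d ↦ P(m1,d)`; the same holds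
symmetrically for `P(d1,m2)`.
-/

section ConvexGeometry

variable {E : Type*} [AddCommGroup E] [Module ℝ E]

theorem eq_zero_of_mem_extremePoints_of_add_mem_of_sub_mem {A : Set E} {x v : E}
    (hx : x ∈ A.extremePoints ℝ) (hadd : x + v ∈ A) (hsub : x - v ∈ A) : v = 0 := by
  have hseg : x ∈ openSegment ℝ (x + v) (x - v) :=
    ⟨1 / 2, 1 / 2, by norm_num, by norm_num, by norm_num, by module⟩
  simpa using ((mem_extremePoints.1 hx).2 _ hadd _ hsub hseg).1

theorem mem_extremePoints_convexHull_of_lt {U : Set E} {p : E} (l : E →ₗ[ℝ] ℝ) (hp : p ∈ U)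
    (hlt : ∀ z ∈ U, z ≠ p → l z < l p) : p ∈ (convexHull ℝ U).extremePoints ℝ := by
  -- `U` lies in the convex set `{z | l z < l p} ∪ {p}`, hence so does its hull.
  set S : Set E := {z | l z < l p ∨ z = p}
  have hle : ∀ z ∈ S, l z ≤ l p := by
    rintro z (hz | rfl)
    exacts [hz.le, le_rfl]
  have hS : Convex ℝ S := by
    refine convex_iff_openSegment_subset.2 ?_
    rintro x hx y hy _ ⟨a, b, ha, hb, hab, rfl⟩
    by_cases hxy : x = p ∧ y = p
    · obtain ⟨rfl, rfl⟩ := hxy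
      right
      rw [← add_smul, hab, one_smul]
    · left
      have hx' := hle x hx
      have hy' := hle y hy
      have hlt : a * l x + b * l y < a * l p + b * l p := by
        rcases not_and_or.1 hxy with hxp | hyp
        · exact add_lt_add_of_lt_of_le (mul_lt_mul_of_pos_left (hx.resolve_right hxp) ha)
            (mul_le_mul_of_nonneg_left hy' hb.le)
        · exact add_lt_add_of_le_of_lt (mul_le_mul_of_nonneg_left hx' ha.le)
            (mul_lt_mul_of_pos_left (hy.resolve_right hyp) hb)
      simpa [← add_mul, hab] using hlt
  have hUS : convexHull ℝ U ⊆ S :=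
    convexHull_min (fun z hz ↦ (eq_or_ne z p).elim Or.inr fun h ↦ Or.inl (hlt z hz h)) hS
  refine mem_extremePoints_iff_left.2 ⟨subset_convexHull ℝ U hp, ?_⟩
  rintro x hx y hy ⟨a, b, ha, hb, hab, hxy⟩
  refine (hUS hx).resolve_left fun hlx ↦ ?_
  have hly := hle y (hUS hy)
  have hcomb : a * l x + b * l y = l p := by rw [← hxy]; simp
  have : a * l x + b * l y < a * l p + b * l p :=
    add_lt_add_of_lt_of_le (mul_lt_mul_of_pos_left hlx ha) (mul_le_mul_of_nonneg_left hly hb.le)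
  rw [← add_mul, hab, one_mul] at this
  exact this.ne hcomb

end ConvexGeometry

theorem corner_score_lt {M K t x y : ℝ} (hM : 0 < M) (hx : x ≤ M) (ht : 2 * M + 2 * K < t)
    (hxy : x + y < t) (hne : (x, y) ≠ (M, K)) :
    ((t - M - 2 * K) * x + M * y) * (t - x - y) < M * (t - M - K) ^ 2 := by
  have key : M * (t - M - K) ^ 2 - ((t - M - 2 * K) * x + M * y) * (t - x - y) =
      M * (x + y - M - K) ^ 2 + (t - 2 * M - 2 * K) * (M - x) * (t - x - y) := by ring
  rcases hx.lt_or_eq with hx | rfl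
  · have : 0 < (t - 2 * M - 2 * K) * (M - x) * (t - x - y) := by
      apply mul_pos (mul_pos _ _) _ <;> linarith
    nlinarith [sq_nonneg (x + y - M - K)]
  · have hyK : (y - K) ^ 2 ≠ 0 := pow_ne_zero 2 (sub_ne_zero.2 fun h ↦ hne (by rw [h]))
    nlinarith [mul_pos hM (lt_of_le_of_ne (sq_nonneg _) hyK.symm)]

section RateRegion

variable {T m1 m2 d1 d2 : ℕ} {q : ℝ}

theorem rate1_nonneg (hq : 1 ≤ q) (hd : d1 + d2 ≤ T) : 0 ≤ rate1 T q d1 d2 := by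
  have hd' : (d1 : ℝ) + d2 ≤ T := by exact_mod_cast hd
  exact mul_nonneg (mul_nonneg d1.cast_nonneg (by linarith)) (Real.logb_nonneg one_lt_two hq)

theorem rate2_nonneg (hq : 1 ≤ q) (hd : d1 + d2 ≤ T) : 0 ≤ rate2 T q d1 d2 := by
  have hd' : (d1 : ℝ) + d2 ≤ T := by exact_mod_cast hd
  exact mul_nonneg (mul_nonneg d2.cast_nonneg (by linarith)) (Real.logb_nonneg one_lt_two hq)

theorem rate1_pos (hq : 1 < q) (hd1 : 0 < d1) (hd : d1 + d2 < T) : 0 < rate1 T q d1 d2 := by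
  have hd' : (d1 : ℝ) + d2 < T := by exact_mod_cast hd
  exact mul_pos (mul_pos (Nat.cast_pos.2 hd1) (by linarith)) (Real.logb_pos one_lt_two hq)

theorem rate2_pos (hq : 1 < q) (hd2 : 0 < d2) (hd : d1 + d2 < T) : 0 < rate2 T q d1 d2 := by
  have hd' : (d1 : ℝ) + d2 < T := by exact_mod_cast hd
  exact mul_pos (mul_pos (Nat.cast_pos.2 hd2) (by linarith)) (Real.logb_pos one_lt_two hq)

theorem rate1_le_rate1_right_zero (hq : 1 ≤ q) (hd1 : d1 ≤ m1) (hT : 2 * m1 ≤ T) :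
    rate1 T q d1 d2 ≤ rate1 T q m1 0 := by
  have hd1' : (d1 : ℝ) ≤ m1 := by exact_mod_cast hd1
  have hT' : 2 * (m1 : ℝ) ≤ T := by exact_mod_cast hT
  refine mul_le_mul_of_nonneg_right ?_ (Real.logb_nonneg one_lt_two hq)
  push_cast
  nlinarith [mul_nonneg (sub_nonneg.2 hd1') (by linarith : (0 : ℝ) ≤ T - m1 - d1),
    mul_nonneg (Nat.cast_nonneg (α := ℝ) d1) (Nat.cast_nonneg (α := ℝ) d2)]

theorem rate2_le_rate2_left_zero (hq : 1 ≤ q) (hd2 : d2 ≤ m2) (hT : 2 * m2 ≤ T) :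
    rate2 T q d1 d2 ≤ rate2 T q 0 m2 := by
  have hd2' : (d2 : ℝ) ≤ m2 := by exact_mod_cast hd2
  have hT' : 2 * (m2 : ℝ) ≤ T := by exact_mod_cast hT
  refine mul_le_mul_of_nonneg_right ?_ (Real.logb_nonneg one_lt_two hq)
  push_cast
  nlinarith [mul_nonneg (sub_nonneg.2 hd2') (by linarith : (0 : ℝ) ≤ T - m2 - d2),
    mul_nonneg (Nat.cast_nonneg (α := ℝ) d1) (Nat.cast_nonneg (α := ℝ) d2)]

theorem rateRect_eq_prod (T : ℕ) (q : ℝ) (d1 d2 : ℕ) :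
    rateRect T q d1 d2 = Set.Icc 0 (rate1 T q d1 d2) ×ˢ Set.Icc 0 (rate2 T q d1 d2) := by
  ext
  simp only [rateRect, Set.mem_ofPred_eq, Set.mem_prod, Set.mem_Icc, and_assoc]

theorem ratePair_mem_rateRect (hq : 1 ≤ q) (hd : d1 + d2 ≤ T) :
    (rate1 T q d1 d2, rate2 T q d1 d2) ∈ rateRect T q d1 d2 :=
  ⟨rate1_nonneg hq hd, le_rfl, rate2_nonneg hq hd, le_rfl⟩

theorem rateRect_subset_rateRegionCol (hd1 : d1 ≤ m1) (hd2 : d2 ≤ m2) :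
    rateRect T q d1 d2 ⊆ rateRegionCol T m1 m2 q := fun _ hz ↦
  subset_convexHull ℝ _ (Set.mem_iUnion₂.2 ⟨d1, hd1, Set.mem_iUnion₂.2 ⟨d2, hd2, hz⟩⟩)

theorem exists_mem_rateRect_of_mem_extremePoints {p : ℝ × ℝ}
    (hp : p ∈ (rateRegionCol T m1 m2 q).extremePoints ℝ) :
    ∃ e1 ≤ m1, ∃ e2 ≤ m2, p ∈ rateRect T q e1 e2 := by
  simpa only [Set.mem_iUnion, exists_prop] using extremePoints_convexHull_subset hp

theorem eq_zero_or_eq_rate_of_mem_extremePoints {p : ℝ × ℝ} (hd1 : d1 ≤ m1) (hd2 : d2 ≤ m2)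
    (hp : p ∈ (rateRegionCol T m1 m2 q).extremePoints ℝ) (hpR : p ∈ rateRect T q d1 d2) :
    (p.1 = 0 ∨ p.1 = rate1 T q d1 d2) ∧ (p.2 = 0 ∨ p.2 = rate2 T q d1 d2) := by
  have h := inter_extremePoints_subset_extremePoints_of_subset
    (rateRect_subset_rateRegionCol hd1 hd2) ⟨hpR, hp⟩
  rw [rateRect_eq_prod, extremePoints_prod, Set.extremePoints_Icc (hpR.1.trans hpR.2.1),
    Set.extremePoints_Icc (hpR.2.2.1.trans hpR.2.2.2)] at h
  exact h

theorem eq_of_mem_extremePoints_of_fst_eq_zero {p : ℝ × ℝ} (hq : 1 ≤ q) (hT : 2 * m2 ≤ T)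
    (hp : p ∈ (rateRegionCol T m1 m2 q).extremePoints ℝ) (h1 : p.1 = 0) (h2 : p.2 ≠ 0) :
    p = (rate1 T q 0 m2, rate2 T q 0 m2) := by
  obtain ⟨e1, he1, e2, he2, hpR⟩ := exists_mem_rateRect_of_mem_extremePoints hp
  have hpR' : p ∈ rateRect T q 0 m2 :=
    ⟨h1.ge, by simp [h1, rate1], hpR.2.2.1, hpR.2.2.2.trans (rate2_le_rate2_left_zero hq he2 hT)⟩
  obtain ⟨-, h2' | h2'⟩ := eq_zero_or_eq_rate_of_mem_extremePoints (Nat.zero_le _) le_rfl hp hpR'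
  · exact absurd h2' h2
  · exact Prod.ext (by simp [h1, rate1]) h2'

theorem eq_of_mem_extremePoints_of_snd_eq_zero {p : ℝ × ℝ} (hq : 1 ≤ q) (hT : 2 * m1 ≤ T)
    (hp : p ∈ (rateRegionCol T m1 m2 q).extremePoints ℝ) (h1 : p.1 ≠ 0) (h2 : p.2 = 0) :
    p = (rate1 T q m1 0, rate2 T q m1 0) := by
  obtain ⟨e1, he1, e2, he2, hpR⟩ := exists_mem_rateRect_of_mem_extremePoints hp
  have hpR' : p ∈ rateRect T q m1 0 :=
    ⟨hpR.1, hpR.2.1.trans (rate1_le_rate1_right_zero hq he1 hT), h2.ge, by simp [h2, rate2]⟩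
  obtain ⟨h1' | h1', -⟩ := eq_zero_or_eq_rate_of_mem_extremePoints le_rfl (Nat.zero_le _) hp hpR'
  · exact absurd h1' h1
  · exact Prod.ext h1' (by simp [h2, rate2])

/-- With `δ = log₂ q · (T - 2e1 - 2e2 - 1) / 2`, the point `P(e1,e2) + (δ, δ)` lies on the segment
from `P(e1+1,e2)` to `P(e1,e2+1)`, while `P(e1,e2) - (δ, δ)` lies in `R(e1,e2)`. -/
theorem ratePair_notMem_extremePoints {e1 e2 : ℕ} (hq : 1 < q) (he1 : 0 < e1) (he2 : 0 < e2)
    (hm1 : e1 < m1) (hm2 : e2 < m2) (hT : 2 * (e1 + e2) + 2 ≤ T) :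
    (rate1 T q e1 e2, rate2 T q e1 e2) ∉ (rateRegionCol T m1 m2 q).extremePoints ℝ := by
  intro hp
  have hL : 0 < Real.logb 2 q := Real.logb_pos one_lt_two hq
  have he1' : (1 : ℝ) ≤ e1 := by exact_mod_cast he1
  have he2' : (1 : ℝ) ≤ e2 := by exact_mod_cast he2
  have hT' : 2 * ((e1 : ℝ) + e2) + 2 ≤ T := by exact_mod_cast hT
  set δ : ℝ := Real.logb 2 q * (T - 2 * e1 - 2 * e2 - 1) / 2 with hδ
  have hδpos : 0 < δ := div_pos (mul_pos hL (by linarith)) two_pos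
  have hadd : (rate1 T q e1 e2, rate2 T q e1 e2) + (δ, δ) ∈ rateRegionCol T m1 m2 q := by
    have hP := rateRect_subset_rateRegionCol hm1 hm2.le
      (ratePair_mem_rateRect (T := T) (d1 := e1 + 1) (d2 := e2) hq.le (by omega))
    have hP' := rateRect_subset_rateRegionCol hm1.le hm2
      (ratePair_mem_rateRect (T := T) (d1 := e1) (d2 := e2 + 1) hq.le (by omega))
    have hr : (0 : ℝ) < T - e1 - e2 - 1 := by linarith
    have hw : (T - 2 * e2 - 1 : ℝ) / (2 * (T - e1 - e2 - 1)) +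
        (T - 2 * e1 - 1) / (2 * (T - e1 - e2 - 1)) = 1 := by
      field_simp
      ring
    have hconv : Convex ℝ (rateRegionCol T m1 m2 q) := convex_convexHull ℝ _
    convert hconv hP hP' (div_nonneg (by linarith) (by linarith))
      (div_nonneg (by linarith) (by linarith)) hw using 1
    simp only [Prod.mk_add_mk, Prod.smul_mk, smul_eq_mul, rate1, rate2, Prod.mk.injEq, hδ]
    push_cast
    constructor <;> field_simp <;> ring
  have hsub : (rate1 T q e1 e2, rate2 T q e1 e2) - (δ, δ) ∈ rateRegionCol T m1 m2 q := by
    have hδ1 : δ ≤ rate1 T q e1 e2 := by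
      rw [hδ, rate1, mul_comm _ (Real.logb 2 q), mul_div_assoc]
      exact mul_le_mul_of_nonneg_left (by nlinarith) hL.le
    have hδ2 : δ ≤ rate2 T q e1 e2 := by
      rw [hδ, rate2, mul_comm _ (Real.logb 2 q), mul_div_assoc]
      exact mul_le_mul_of_nonneg_left (by nlinarith) hL.le
    exact rateRect_subset_rateRegionCol hm1.le hm2.le
      ⟨by simpa using hδ1, by simpa using hδpos.le, by simpa using hδ2, by simpa using hδpos.le⟩
  have := eq_zero_of_mem_extremePoints_of_add_mem_of_sub_mem hp hadd hsub
  exact hδpos.ne' (congrArg Prod.fst this)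

theorem ratePair_mem_extremePoints_of_lt (a b : ℝ) (ha : 0 < a) (hb : 0 < b) (hq : 1 ≤ q)
    (hd1 : d1 ≤ m1) (hd2 : d2 ≤ m2) (hd : d1 + d2 ≤ T)
    (hlt : ∀ e1 ≤ m1, ∀ e2 ≤ m2, (e1, e2) ≠ (d1, d2) →
      a * rate1 T q e1 e2 + b * rate2 T q e1 e2 < a * rate1 T q d1 d2 + b * rate2 T q d1 d2) :
    (rate1 T q d1 d2, rate2 T q d1 d2) ∈ (rateRegionCol T m1 m2 q).extremePoints ℝ := by
  refine mem_extremePoints_convexHull_of_lt (a • LinearMap.fst ℝ ℝ ℝ + b • LinearMap.snd ℝ ℝ ℝ)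
    (Set.mem_iUnion₂.2 ⟨d1, hd1, Set.mem_iUnion₂.2 ⟨d2, hd2, ratePair_mem_rateRect hq hd⟩⟩) ?_
  intro z hz hzp
  obtain ⟨e1, he1, e2, he2, -, hz1, -, hz2⟩ : ∃ e1 ≤ m1, ∃ e2 ≤ m2, z ∈ rateRect T q e1 e2 := by
    simpa only [Set.mem_iUnion, exists_prop] using hz
  simp only [LinearMap.add_apply, LinearMap.smul_apply, LinearMap.fst_apply,
    LinearMap.snd_apply, smul_eq_mul]
  by_cases he : (e1, e2) = (d1, d2)
  · obtain ⟨rfl, rfl⟩ := Prod.mk.inj he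
    rcases hz1.lt_or_eq with hz1 | hz1
    · nlinarith
    rcases hz2.lt_or_eq with hz2 | hz2
    · nlinarith
    exact absurd (Prod.ext hz1 hz2) hzp
  · nlinarith [hlt e1 he1 e2 he2 he]

theorem ratePair_max_left_mem_extremePoints (hq : 1 < q) (hm1 : 0 < m1)
    (hT : 2 * (m1 + m2) + 2 ≤ T) (hd2 : d2 ≤ m2) :
    (rate1 T q m1 d2, rate2 T q m1 d2) ∈ (rateRegionCol T m1 m2 q).extremePoints ℝ := by
  have hT' : 2 * ((m1 : ℝ) + m2) + 2 ≤ T := by exact_mod_cast hT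
  have hd2' : (d2 : ℝ) ≤ m2 := by exact_mod_cast hd2
  refine ratePair_mem_extremePoints_of_lt (T - m1 - 2 * d2) m1 (by linarith)
    (Nat.cast_pos.2 hm1) hq.le le_rfl hd2 (by omega) fun e1 he1 e2 he2 he ↦ ?_
  have he1' : (e1 : ℝ) ≤ m1 := by exact_mod_cast he1
  have he2' : (e2 : ℝ) ≤ m2 := by exact_mod_cast he2
  have hne : ((e1 : ℝ), (e2 : ℝ)) ≠ ((m1 : ℝ), (d2 : ℝ)) := by simpa [Prod.ext_iff] using he
  have := corner_score_lt (K := (d2 : ℝ)) (t := T) (Nat.cast_pos.2 hm1) he1' (by linarith) (by linarith) hne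
  simp only [rate1, rate2]
  linear_combination mul_lt_mul_of_pos_left this (Real.logb_pos one_lt_two hq)

theorem ratePair_max_right_mem_extremePoints (hq : 1 < q) (hm2 : 0 < m2)
    (hT : 2 * (m1 + m2) + 2 ≤ T) (hd1 : d1 ≤ m1) :
    (rate1 T q d1 m2, rate2 T q d1 m2) ∈ (rateRegionCol T m1 m2 q).extremePoints ℝ := by
  have hT' : 2 * ((m1 : ℝ) + m2) + 2 ≤ T := by exact_mod_cast hT
  have hd1' : (d1 : ℝ) ≤ m1 := by exact_mod_cast hd1
  refine ratePair_mem_extremePoints_of_lt m2 (T - m2 - 2 * d1) (Nat.cast_pos.2 hm2)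
    (by linarith) hq.le hd1 le_rfl (by omega) fun e1 he1 e2 he2 he ↦ ?_
  have he1' : (e1 : ℝ) ≤ m1 := by exact_mod_cast he1
  have he2' : (e2 : ℝ) ≤ m2 := by exact_mod_cast he2
  have hne : ((e2 : ℝ), (e1 : ℝ)) ≠ ((m2 : ℝ), (d1 : ℝ)) := by
    simpa [Prod.ext_iff, and_comm] using he
  have := corner_score_lt (K := (d1 : ℝ)) (t := T) (Nat.cast_pos.2 hm2) he2' (by linarith)
    (by linarith) hne
  simp only [rate1, rate2]
  linear_combination mul_lt_mul_of_pos_left this (Real.logb_pos one_lt_two hq)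

theorem exists_eq_ratePair_of_mem_extremePoints {p : ℝ × ℝ} (hq : 1 < q)
    (hT : 2 * (m1 + m2) + 2 ≤ T) (hp : p ∈ (rateRegionCol T m1 m2 q).extremePoints ℝ)
    (hp0 : p ≠ (0, 0)) :
    ∃ d1 d2 : ℕ, ((d1 ≤ m1 ∧ d2 = m2) ∨ (d1 = m1 ∧ d2 ≤ m2)) ∧
      p = (rate1 T q d1 d2, rate2 T q d1 d2) := by
  by_cases h1 : p.1 = 0
  · have h2 : p.2 ≠ 0 := fun h2 ↦ hp0 (Prod.ext h1 h2)
    exact ⟨0, m2, Or.inl ⟨Nat.zero_le _, rfl⟩,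
      eq_of_mem_extremePoints_of_fst_eq_zero hq.le (by omega) hp h1 h2⟩
  by_cases h2 : p.2 = 0
  · exact ⟨m1, 0, Or.inr ⟨rfl, Nat.zero_le _⟩,
      eq_of_mem_extremePoints_of_snd_eq_zero hq.le (by omega) hp h1 h2⟩
  obtain ⟨e1, he1, e2, he2, hpR⟩ := exists_mem_rateRect_of_mem_extremePoints hp
  obtain ⟨hx, hy⟩ := eq_zero_or_eq_rate_of_mem_extremePoints he1 he2 hp hpR
  have hpe : p = (rate1 T q e1 e2, rate2 T q e1 e2) :=
    Prod.ext (hx.resolve_left h1) (hy.resolve_left h2)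
  rcases he1.eq_or_lt with rfl | he1'
  · exact ⟨e1, e2, Or.inr ⟨rfl, he2⟩, hpe⟩
  rcases he2.eq_or_lt with rfl | he2'
  · exact ⟨e1, e2, Or.inl ⟨he1, rfl⟩, hpe⟩
  have he1_pos : 0 < e1 := Nat.pos_of_ne_zero fun h ↦ h1 (by simp [hpe, h, rate1])
  have he2_pos : 0 < e2 := Nat.pos_of_ne_zero fun h ↦ h2 (by simp [hpe, h, rate2])
  exact absurd (hpe ▸ hp) (ratePair_notMem_extremePoints hq he1_pos he2_pos he1' he2' (by omega))

end RateRegion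

/-- The extreme points of `R_col`, other than the origin, are exactly the rate pairs
`(R1(d1,d2), R2(d1,d2))` for `(d1,d2)` in `D̃ = {(d1,m2) : d1 ≤ m1} ∪ {(m1,d2) : d2 ≤ m2}`. -/
theorem extremePoints_rateRegionCol (m1 m2 T : ℕ) (q : ℝ)
    (hm1 : 1 ≤ m1) (hm2 : 1 ≤ m2) (hT : 2 * (m1 + m2) + 2 ≤ T) (hq : 2 ≤ q) :
    Set.extremePoints ℝ (rateRegionCol T m1 m2 q) \ {(0, 0)} =
      {p : ℝ × ℝ | ∃ d1 d2 : ℕ,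
        ((d1 ≤ m1 ∧ d2 = m2) ∨ (d1 = m1 ∧ d2 ≤ m2)) ∧
        p = (rate1 T q d1 d2, rate2 T q d1 d2)} := by
  have hq' : 1 < q := by linarith
  ext p
  constructor
  · rintro ⟨hp, hp0⟩
    exact exists_eq_ratePair_of_mem_extremePoints hq' hT hp hp0
  · rintro ⟨d1, d2, ⟨hd1, rfl⟩ | ⟨rfl, hd2⟩, rfl⟩
    · exact ⟨ratePair_max_right_mem_extremePoints hq' hm2 hT hd1,
        fun h ↦ (rate2_pos hq' hm2 (by omega)).ne' (congrArg Prod.snd h)⟩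
    · exact ⟨ratePair_max_left_mem_extremePoints hq' hm1 hT hd2,
        fun h ↦ (rate1_pos hq' hm1 (by omega)).ne' (congrArg Prod.fst h)⟩
end

section
/- Let m1, m2, n ≥ 1 and T be integers with T ≥ 2(m1+m2)+2, and fix a real number q ≥ 2. With R(d1,d2) the rectangle {(x,y) ∈ ℝ² : 0 ≤ x ≤ d1(T−d1−d2)·log2 q, 0 ≤ y ≤ d2(T−d1−d2)·log2 q}, define R_col as the convex hull of the union of R(d1,d2) over all 0 ≤ d1 ≤ m1, 0 ≤ d2 ≤ m2; define k = min(m1+m2, n) and R_coop = {(x,y) ∈ ℝ² : x ≥ 0, y ≥ 0, x+y ≤ k(T−k)·log2 q}; and define R* as the convex hull of the union of R(d1,d2) over the set D* = {(d1,d2) : 0 ≤ d1 ≤ min(n,m1), 0 ≤ d2 ≤ min(n,m2), d1+d2 ≤ min(n, m1+m2)}. Then R_coop ∩ R_col ⊆ R*. -/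
open Finset

-- ========== auxiliary lemmas ==========

lemma seg_coeff {x a : ℝ} (h0 : 0 ≤ x) (h1 : x ≤ a) : ∃ t : ℝ, 0 ≤ t ∧ t ≤ 1 ∧ t * a = x := by
  rcases eq_or_lt_of_le (h0.trans h1) with h | h
  · exact ⟨0, le_refl _, zero_le_one, by rw [← h] at h1 ⊢; simp; linarith⟩
  · exact ⟨x / a, by positivity, by rw [div_le_one h]; exact h1, div_mul_cancel₀ _ h.ne'⟩

lemma conv_pt {C : Set (ℝ × ℝ)} (hC : Convex ℝ C) {p q : ℝ × ℝ} (hp : p ∈ C) (hq : q ∈ C)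
    {t : ℝ} (h0 : 0 ≤ t) (h1 : t ≤ 1) {r : ℝ × ℝ}
    (e1 : r.1 = (1 - t) * p.1 + t * q.1) (e2 : r.2 = (1 - t) * p.2 + t * q.2) : r ∈ C := by
  have := hC hp hq (by linarith : (0:ℝ) ≤ 1 - t) h0 (by ring)
  convert this using 1
  ext <;> simpa

lemma pentagon_mem {C : Set (ℝ × ℝ)} (hC : Convex ℝ C) {X Y S x y : ℝ}
    (h1 : ((0:ℝ),(0:ℝ)) ∈ C) (h2 : ((X:ℝ),(0:ℝ)) ∈ C) (h3 : ((0:ℝ),Y) ∈ C)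
    (h4 : (X, S - X) ∈ C) (h5 : (S - Y, Y) ∈ C) (hSXY : S ≤ X + Y)
    (hx : 0 ≤ x) (hy : 0 ≤ y) (hxX : x ≤ X) (hyY : y ≤ Y) (hxy : x + y ≤ S) :
    (x, y) ∈ C := by
  by_cases hcase : y ≤ S - X
  · obtain ⟨s, hs0, hs1, hsx⟩ := seg_coeff hx hxX
    obtain ⟨t, ht0, ht1, hty⟩ := seg_coeff hy hcase
    have hSX0 : (0:ℝ) ≤ S - X := le_trans hy hcase
    obtain ⟨r, hr0, hr1, hr⟩ := seg_coeff hSX0 (by linarith : S - X ≤ Y)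
    have hc1 : ((0:ℝ), S - X) ∈ C := conv_pt hC h1 h3 hr0 hr1 (by simp; try ring) (by simp [hr]; try ring)
    have hp1 : ((x:ℝ), (0:ℝ)) ∈ C := conv_pt hC h1 h2 hs0 hs1 (by simp [hsx]; try ring) (by simp; try ring)
    have hp2 : ((x:ℝ), S - X) ∈ C := conv_pt hC hc1 h4 hs0 hs1 (by simp [hsx]; try ring) (by simp; try ring)
    exact conv_pt hC hp1 hp2 ht0 ht1 (by simp; try ring) (by simp [hty]; try ring)
  · push_neg at hcase
    obtain ⟨μ, hμ0, hμ1, hμy⟩ := seg_coeff (x := y - (S - X)) (a := Y - (S - X)) (by linarith) (by linarith)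
    obtain ⟨t, ht0, ht1, htx⟩ := seg_coeff (x := x) (a := S - y) hx (by linarith)
    have hw : (S - y, y) ∈ C :=
      conv_pt hC h4 h5 hμ0 hμ1 (by simp; linear_combination hμy) (by simp; linear_combination -hμy)
    obtain ⟨r, hr0, hr1, hry⟩ := seg_coeff hy hyY
    have h0y : ((0:ℝ), y) ∈ C := conv_pt hC h1 h3 hr0 hr1 (by simp; try ring) (by simp [hry]; try ring)
    exact conv_pt hC h0y hw ht0 ht1 (by simp [htx]; try ring) (by simp; ring)

noncomputable def ell : (ℝ × ℝ) →ₗ[ℝ] ℝ := LinearMap.fst ℝ ℝ ℝ + LinearMap.snd ℝ ℝ ℝ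

lemma ell_apply (p : ℝ × ℝ) : ell p = p.1 + p.2 := rfl

lemma clip (c : ℝ) (S : Set (ℝ × ℝ)) {p : ℝ × ℝ} (hp : p ∈ convexHull ℝ S) (hpc : p.1 + p.2 ≤ c) :
    p ∈ convexHull ℝ ((S ∩ {q | q.1 + q.2 ≤ c}) ∪ (convexHull ℝ S ∩ {q | q.1 + q.2 = c})) := by
  classical
  set K := convexHull ℝ ((S ∩ {q | q.1 + q.2 ≤ c}) ∪ (convexHull ℝ S ∩ {q | q.1 + q.2 = c})) with hK
  have hKconv : Convex ℝ K := convex_convexHull ℝ _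
  have hKsub1 : convexHull ℝ (S ∩ {q | q.1 + q.2 ≤ c}) ⊆ K :=
    convexHull_mono Set.subset_union_left
  rw [_root_.convexHull_eq] at hp
  obtain ⟨ι, t, w, z, hw0, hw1, hzS, hcm⟩ := hp
  set t₁ := t.filter (fun i => (z i).1 + (z i).2 ≤ c) with ht₁
  set t₂ := t.filter (fun i => ¬ ((z i).1 + (z i).2 ≤ c)) with ht₂
  have hsplit : ∑ i ∈ t₁, w i + ∑ i ∈ t₂, w i = 1 := by
    rw [ht₁, ht₂, Finset.sum_filter_add_sum_filter_not]; exact hw1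
  have hw01 : ∀ i ∈ t₁, 0 ≤ w i := fun i hi => hw0 i (Finset.mem_filter.1 hi).1
  have hw02 : ∀ i ∈ t₂, 0 ≤ w i := fun i hi => hw0 i (Finset.mem_filter.1 hi).1
  have ha0 : (0:ℝ) ≤ ∑ i ∈ t₁, w i := Finset.sum_nonneg hw01
  have hb0 : (0:ℝ) ≤ ∑ i ∈ t₂, w i := Finset.sum_nonneg hw02
  have hpsum : p = ∑ i ∈ t, w i • z i := by
    rw [← hcm, Finset.centerMass, hw1]; simp
  have hpsplit : p = (∑ i ∈ t₁, w i • z i) + (∑ i ∈ t₂, w i • z i) := by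
    rw [hpsum, ht₁, ht₂, Finset.sum_filter_add_sum_filter_not]
  by_cases hbz : (∑ i ∈ t₂, w i) = 0
  · have hz2 : ∀ i ∈ t₂, w i = 0 := (Finset.sum_eq_zero_iff_of_nonneg hw02).1 hbz
    have ha1 : (∑ i ∈ t₁, w i) = 1 := by linarith
    have hz20 : (∑ i ∈ t₂, w i • z i) = 0 :=
      Finset.sum_eq_zero (fun i hi => by rw [hz2 i hi, zero_smul])
    have hp1 : p = t₁.centerMass w z := by
      rw [Finset.centerMass, ha1, hpsplit, hz20, add_zero]
      simp
    apply hKsub1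
    rw [hp1]
    exact Finset.centerMass_mem_convexHull t₁ hw01 (by rw [ha1]; norm_num)
      (fun i hi => ⟨hzS i (Finset.mem_filter.1 hi).1, (Finset.mem_filter.1 hi).2⟩)
  · have hbpos : (0:ℝ) < ∑ i ∈ t₂, w i := lt_of_le_of_ne hb0 (Ne.symm hbz)
    set b := ∑ i ∈ t₂, w i with hb
    set a := ∑ i ∈ t₁, w i with ha
    set v := t₂.centerMass w z with hv
    have hvS : v ∈ convexHull ℝ S :=
      Finset.centerMass_mem_convexHull t₂ hw02 hbpos (fun i hi => hzS i (Finset.mem_filter.1 hi).1)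
    have hbv : b • v = ∑ i ∈ t₂, w i • z i := by
      rw [hv, Finset.centerMass, ← hb, smul_inv_smul₀ hbz]
    have hsum2 : b * c < ∑ i ∈ t₂, w i * ((z i).1 + (z i).2) := by
      obtain ⟨j, hj, hjpos⟩ : ∃ j ∈ t₂, 0 < w j := by
        by_contra h
        push_neg at h
        have : b ≤ 0 := Finset.sum_nonpos (fun i hi => h i hi)
        linarith
      rw [hb, Finset.sum_mul]
      apply Finset.sum_lt_sum (fun i hi => by
        have := (Finset.mem_filter.1 hi).2
        push_neg at this
        nlinarith [hw02 i hi])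
      exact ⟨j, hj, by
        have := (Finset.mem_filter.1 hj).2
        push_neg at this
        nlinarith⟩
    have hlv : v.1 + v.2 = b⁻¹ * ∑ i ∈ t₂, w i * ((z i).1 + (z i).2) := by
      have h2 : (ell v : ℝ) = b⁻¹ * ∑ i ∈ t₂, w i * ((z i).1 + (z i).2) := by
        rw [hv, Finset.centerMass, ← hb, map_smul, map_sum, smul_eq_mul]
        congr 1
        exact Finset.sum_congr rfl (fun i _ => by rw [map_smul, smul_eq_mul, ell_apply])
      rw [← h2, ell_apply]
    have hvc : c < v.1 + v.2 := by
      rw [hlv]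
      calc c = b⁻¹ * (b * c) := by field_simp
        _ < b⁻¹ * ∑ i ∈ t₂, w i * ((z i).1 + (z i).2) :=
            mul_lt_mul_of_pos_left hsum2 (by positivity)
    have hapos : (0:ℝ) < a := by
      rcases lt_or_ge 0 a with h | h
      · exact h
      · exfalso
        have haz : a = 0 := le_antisymm h ha0
        have hz1 : ∀ i ∈ t₁, w i = 0 := (Finset.sum_eq_zero_iff_of_nonneg hw01).1 haz
        have hb1 : b = 1 := by rw [ha] at haz; linarith [hsplit]
        have hpv : p = v := by
          rw [hpsplit, Finset.sum_eq_zero (fun i hi => by rw [hz1 i hi, zero_smul]), zero_add,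
            ← hbv, hb1, one_smul]
        rw [hpv] at hpc
        linarith
    set u := t₁.centerMass w z with hu
    have huS : u ∈ convexHull ℝ (S ∩ {q | q.1 + q.2 ≤ c}) :=
      Finset.centerMass_mem_convexHull t₁ hw01 hapos
        (fun i hi => ⟨hzS i (Finset.mem_filter.1 hi).1, (Finset.mem_filter.1 hi).2⟩)
    have huK : u ∈ K := hKsub1 huS
    have huS' : u ∈ convexHull ℝ S := convexHull_mono Set.inter_subset_left huS
    have hau : a • u = ∑ i ∈ t₁, w i • z i := by
      rw [hu, Finset.centerMass, ← ha, smul_inv_smul₀ (ne_of_gt hapos)]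
    have hpab : p = a • u + b • v := by rw [hau, hbv]; exact hpsplit
    have hab1 : a + b = 1 := hsplit
    have hlp : p.1 + p.2 = a * (u.1 + u.2) + b * (v.1 + v.2) := by
      rw [hpab]; simp [Prod.fst_add, Prod.snd_add, Prod.smul_fst, Prod.smul_snd, smul_eq_mul]; ring
    have haeq : a = 1 - b := by linarith
    have hlp' : p.1 + p.2 = (1 - b) * (u.1 + u.2) + b * (v.1 + v.2) := by
      rw [← haeq]; exact hlp
    have huc : u.1 + u.2 < c := by nlinarith [hlp', hpc, hvc, hbpos, hapos, haeq]
    set τ := (c - (u.1 + u.2)) / ((v.1 + v.2) - (u.1 + u.2)) with hτ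
    have hden : (0:ℝ) < (v.1 + v.2) - (u.1 + u.2) := by linarith
    have hτ0 : 0 < τ := div_pos (by linarith) hden
    have hτ1 : τ ≤ 1 := by
      rw [hτ, div_le_one hden]; linarith
    set wpt := (1 - τ) • u + τ • v with hwpt
    have hwptS : wpt ∈ convexHull ℝ S :=
      (convex_convexHull ℝ S) huS' hvS (by linarith) (le_of_lt hτ0) (by ring)
    have hwc : wpt.1 + wpt.2 = c := by
      have h3 : wpt.1 + wpt.2 = (1 - τ) * (u.1 + u.2) + τ * (v.1 + v.2) := by
        rw [hwpt]
        simp only [Prod.fst_add, Prod.snd_add, Prod.smul_fst, Prod.smul_snd, smul_eq_mul]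
        ring
      rw [h3, hτ]
      field_simp
      ring
    have hwK : wpt ∈ K := subset_convexHull ℝ _ (Set.mem_union_right _ ⟨hwptS, hwc⟩)
    have hbτ : b ≤ τ := by
      rw [hτ, le_div_iff₀ hden]
      nlinarith [hlp', hpc]
    have hr0 : 0 ≤ b / τ := le_of_lt (div_pos hbpos hτ0)
    have hr1 : b / τ ≤ 1 := by rw [div_le_one hτ0]; exact hbτ
    have hfinal : p = (1 - b/τ) • u + (b/τ) • wpt := by
      rw [hwpt, smul_add, smul_smul, smul_smul, ← add_assoc, ← add_smul]
      rw [show (1 - b/τ + b/τ * (1-τ)) = a by rw [haeq]; field_simp; ring]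
      rw [show (b/τ*τ) = b from div_mul_cancel₀ b (ne_of_gt hτ0)]
      exact hpab
    rw [hfinal]
    exact hKconv huK hwK (by linarith) hr0 (by ring)

/- The cooperative outer bound region `R_coop` with `k = min(m1+m2, n)`:
all nonnegative rate pairs with sum at most `k(T−k)·log2 q`. -/
noncomputable def rateRegionCoop (T m1 m2 n : ℕ) (q : ℝ) : Set (ℝ × ℝ) :=
  {p : ℝ × ℝ | 0 ≤ p.1 ∧ 0 ≤ p.2 ∧
    p.1 + p.2 ≤ (min (m1 + m2) n : ℝ) * ((T : ℝ) - (min (m1 + m2) n : ℝ)) * Real.logb 2 q}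

/- The claimed capacity region `R*`: the convex hull of the union of the rectangles
`R(d1,d2)` over `D* = {(d1,d2) : d1 ≤ min n m1, d2 ≤ min n m2, d1+d2 ≤ min n (m1+m2)}`. -/
noncomputable def rateRegionStar (T m1 m2 n : ℕ) (q : ℝ) : Set (ℝ × ℝ) :=
  convexHull ℝ (⋃ (d1 : ℕ) (d2 : ℕ) (_ : d1 ≤ min n m1) (_ : d2 ≤ min n m2)
    (_ : d1 + d2 ≤ min n (m1 + m2)), rateRect T q d1 d2)

set_option maxHeartbeats 2000000
/-- The intersection of the cooperative bound and the coloring bound is contained in `R*`. -/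
theorem coop_inter_col_subset_star (m1 m2 n T : ℕ) (q : ℝ)
    (hm1 : 1 ≤ m1) (hm2 : 1 ≤ m2) (hn : 1 ≤ n)
    (hT : 2 * (m1 + m2) + 2 ≤ T) (hq : 2 ≤ q) :
    rateRegionCoop T m1 m2 n q ∩ rateRegionCol T m1 m2 q ⊆ rateRegionStar T m1 m2 n q := by
  intro p hp
  obtain ⟨hco, hcol⟩ := hp
  obtain ⟨hp1, hp2, hp3⟩ := hco
  have hL : (0:ℝ) ≤ Real.logb 2 q := Real.logb_nonneg one_lt_two (by linarith)
  unfold rateRegionCol at hcol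
  by_cases hcase : m1 + m2 ≤ n
  · -- easy case : the coloring region is already inside R*
    unfold rateRegionStar
    refine convexHull_mono ?_ hcol
    intro x hx
    simp only [Set.mem_iUnion] at hx ⊢
    obtain ⟨d1, h1, d2, h2, hx⟩ := hx
    exact ⟨d1, d2, by omega, by omega, by omega, hx⟩
  · push_neg at hcase
    -- cast facts
    have hnm : (n:ℝ) < (m1:ℝ) + (m2:ℝ) := by exact_mod_cast hcase
    have hTc : 2*((m1:ℝ)+(m2:ℝ)) + 2 ≤ (T:ℝ) := by exact_mod_cast hT
    have hm1c : (1:ℝ) ≤ (m1:ℝ) := by exact_mod_cast hm1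
    have hm2c : (1:ℝ) ≤ (m2:ℝ) := by exact_mod_cast hm2
    have hT2n : (0:ℝ) < (T:ℝ) - 2*(n:ℝ) := by
      have h' : (n:ℝ) + 1 ≤ (m1:ℝ) + (m2:ℝ) := by exact_mod_cast hcase
      linarith
    have hTn : (0:ℝ) < (T:ℝ) - (n:ℝ) := by
      have : (0:ℝ) ≤ (n:ℝ) := Nat.cast_nonneg n
      linarith
    set F := ((T:ℝ)-(n:ℝ)) * Real.logb 2 q with hFdef
    have hF : (0:ℝ) ≤ F := mul_nonneg (le_of_lt hTn) hL
    have hmin : ((m1:ℝ)+(m2:ℝ)) ⊓ (n:ℝ) = (n:ℝ) := min_eq_right (le_of_lt hnm)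
    rw [hmin] at hp3
    have hp3' : p.1 + p.2 ≤ (n:ℝ) * F := by
      have : (n:ℝ)*F = (n:ℝ)*((T:ℝ)-(n:ℝ))*Real.logb 2 q := by rw [hFdef]; ring
      linarith
    -- convexity of the target
    have hstarconv : Convex ℝ (rateRegionStar T m1 m2 n q) := by
      unfold rateRegionStar; exact convex_convexHull ℝ _
    -- corner membership helper
    have hcorner : ∀ e1 e2 : ℕ, e1 + e2 = n → e1 ≤ m1 → e2 ≤ m2 →
        ∀ x y : ℝ, 0 ≤ x → x ≤ (e1:ℝ)*F → 0 ≤ y → y ≤ (e2:ℝ)*F →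
        (x, y) ∈ rateRegionStar T m1 m2 n q := by
      intro e1 e2 he he1 he2 x y hx hx' hy hy'
      have hee : (e1:ℝ) + (e2:ℝ) = (n:ℝ) := by exact_mod_cast he
      unfold rateRegionStar
      apply subset_convexHull
      simp only [Set.mem_iUnion]
      refine ⟨e1, e2, by omega, by omega, by omega, ?_, ?_, ?_, ?_⟩
      · exact hx
      · unfold rate1
        calc x ≤ (e1:ℝ)*F := hx'
          _ = (e1:ℝ)*((T:ℝ)-(e1:ℝ)-(e2:ℝ))*Real.logb 2 q := by
              rw [hFdef, show (T:ℝ)-(e1:ℝ)-(e2:ℝ) = (T:ℝ)-(n:ℝ) by linarith]; ring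
      · exact hy
      · unfold rate2
        calc y ≤ (e2:ℝ)*F := hy'
          _ = (e2:ℝ)*((T:ℝ)-(e1:ℝ)-(e2:ℝ))*Real.logb 2 q := by
              rw [hFdef, show (T:ℝ)-(e1:ℝ)-(e2:ℝ) = (T:ℝ)-(n:ℝ) by linarith]; ring
    -- nonnegativity on the hull
    have hnn : ∀ w ∈ convexHull ℝ (⋃ (d1 : ℕ) (_ : d1 ≤ m1) (d2 : ℕ) (_ : d2 ≤ m2),
        rateRect T q d1 d2), 0 ≤ w.1 ∧ 0 ≤ w.2 := by
      intro w hw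
      have hsub : (⋃ (d1 : ℕ) (_ : d1 ≤ m1) (d2 : ℕ) (_ : d2 ≤ m2), rateRect T q d1 d2) ⊆
          {w : ℝ×ℝ | 0 ≤ w.1 ∧ 0 ≤ w.2} := by
        intro w hw
        simp only [Set.mem_iUnion] at hw
        obtain ⟨d1, _, d2, _, hw⟩ := hw
        exact ⟨hw.1, hw.2.2.1⟩
      have hcv : Convex ℝ {w : ℝ×ℝ | 0 ≤ w.1 ∧ 0 ≤ w.2} := by
        intro x hx y hy s t hs ht hst
        simp only [Set.mem_setOf_eq, Prod.fst_add, Prod.snd_add, Prod.smul_fst, Prod.smul_snd,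
          smul_eq_mul] at *
        exact ⟨add_nonneg (mul_nonneg hs hx.1) (mul_nonneg ht hy.1),
          add_nonneg (mul_nonneg hs hx.2) (mul_nonneg ht hy.2)⟩
      exact convexHull_min hsub hcv hw
    -- halfplane convexity
    have hhalf : ∀ a b r : ℝ, Convex ℝ {w : ℝ×ℝ | a*w.1 + b*w.2 ≤ r} := by
      intro a b r x hx y hy s t hs ht hst
      simp only [Set.mem_setOf_eq, Prod.fst_add, Prod.snd_add, Prod.smul_fst, Prod.smul_snd,
        smul_eq_mul] at *
      calc a*(s*x.1 + t*y.1) + b*(s*x.2 + t*y.2) = s*(a*x.1+b*x.2) + t*(a*y.1+b*y.2) := by ring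
        _ ≤ s*r + t*r := add_le_add (mul_le_mul_of_nonneg_left hx hs)
            (mul_le_mul_of_nonneg_left hy ht)
        _ = r := by rw [← add_mul, hst, one_mul]
    -- the two supporting-line valid inequalities
    have hV1 : ∀ cc : ℝ, 0 ≤ cc → cc*((T:ℝ)-2*(n:ℝ)) = (m1:ℝ) →
        ∀ w ∈ convexHull ℝ (⋃ (d1 : ℕ) (_ : d1 ≤ m1) (d2 : ℕ) (_ : d2 ≤ m2),
          rateRect T q d1 d2), (1+cc)*w.1 + cc*w.2 ≤ ((m1:ℝ)+cc*(n:ℝ))*F := by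
      intro cc hcc hcceq w hw
      refine convexHull_min (t := {w : ℝ×ℝ | (1+cc)*w.1 + cc*w.2 ≤ ((m1:ℝ)+cc*(n:ℝ))*F})
        ?_ (hhalf (1+cc) cc (((m1:ℝ)+cc*(n:ℝ))*F)) hw
      intro w' hw'
      simp only [Set.mem_iUnion] at hw'
      obtain ⟨d1, hd1, d2, hd2, hw'⟩ := hw'
      obtain ⟨ha1, ha2, ha3, ha4⟩ := hw'
      unfold rate1 at ha2
      unfold rate2 at ha4
      have hd1c : (d1:ℝ) ≤ (m1:ℝ) := by exact_mod_cast hd1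
      have hd2c : (d2:ℝ) ≤ (m2:ℝ) := by exact_mod_cast hd2
      have hσ : (0:ℝ) ≤ (T:ℝ)-(d1:ℝ)-(d2:ℝ) := by linarith
      have hkey : ((d1:ℝ) + cc*((d1:ℝ)+(d2:ℝ))) * ((T:ℝ)-(d1:ℝ)-(d2:ℝ)) ≤
          ((m1:ℝ)+cc*(n:ℝ))*((T:ℝ)-(n:ℝ)) := by
        have hident : ((m1:ℝ)+cc*(n:ℝ))*((T:ℝ)-(n:ℝ)) -
            ((m1:ℝ) + cc*((d1:ℝ)+(d2:ℝ)))*((T:ℝ)-(d1:ℝ)-(d2:ℝ)) =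
            cc*(((d1:ℝ)+(d2:ℝ))-(n:ℝ))^2 := by
          linear_combination (-((d1:ℝ)+(d2:ℝ)-(n:ℝ))) * hcceq
        nlinarith [mul_nonneg hcc (sq_nonneg ((d1:ℝ)+(d2:ℝ)-(n:ℝ))),
          mul_nonneg (sub_nonneg.2 hd1c) hσ]
      show (1+cc)*w'.1 + cc*w'.2 ≤ _
      have e1 : 0 ≤ (1+cc)*((d1:ℝ)*((T:ℝ)-(d1:ℝ)-(d2:ℝ))*Real.logb 2 q - w'.1) :=
        mul_nonneg (by linarith) (by linarith)
      have e2 : 0 ≤ cc*((d2:ℝ)*((T:ℝ)-(d1:ℝ)-(d2:ℝ))*Real.logb 2 q - w'.2) :=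
        mul_nonneg hcc (by linarith)
      have h3 := mul_le_mul_of_nonneg_right hkey hL
      have h4 : (((m1:ℝ)+cc*(n:ℝ))*((T:ℝ)-(n:ℝ)))*Real.logb 2 q = ((m1:ℝ)+cc*(n:ℝ))*F := by
        rw [hFdef]; ring
      nlinarith [e1, e2, h3, h4]
    have hV2 : ∀ cc : ℝ, 0 ≤ cc → cc*((T:ℝ)-2*(n:ℝ)) = (m2:ℝ) →
        ∀ w ∈ convexHull ℝ (⋃ (d1 : ℕ) (_ : d1 ≤ m1) (d2 : ℕ) (_ : d2 ≤ m2),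
          rateRect T q d1 d2), cc*w.1 + (1+cc)*w.2 ≤ ((m2:ℝ)+cc*(n:ℝ))*F := by
      intro cc hcc hcceq w hw
      refine convexHull_min (t := {w : ℝ×ℝ | cc*w.1 + (1+cc)*w.2 ≤ ((m2:ℝ)+cc*(n:ℝ))*F})
        ?_ (hhalf cc (1+cc) (((m2:ℝ)+cc*(n:ℝ))*F)) hw
      intro w' hw'
      simp only [Set.mem_iUnion] at hw'
      obtain ⟨d1, hd1, d2, hd2, hw'⟩ := hw'
      obtain ⟨ha1, ha2, ha3, ha4⟩ := hw'
      unfold rate1 at ha2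
      unfold rate2 at ha4
      have hd1c : (d1:ℝ) ≤ (m1:ℝ) := by exact_mod_cast hd1
      have hd2c : (d2:ℝ) ≤ (m2:ℝ) := by exact_mod_cast hd2
      have hσ : (0:ℝ) ≤ (T:ℝ)-(d1:ℝ)-(d2:ℝ) := by linarith
      have hkey : ((d2:ℝ) + cc*((d1:ℝ)+(d2:ℝ))) * ((T:ℝ)-(d1:ℝ)-(d2:ℝ)) ≤
          ((m2:ℝ)+cc*(n:ℝ))*((T:ℝ)-(n:ℝ)) := by
        have hident : ((m2:ℝ)+cc*(n:ℝ))*((T:ℝ)-(n:ℝ)) -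
            ((m2:ℝ) + cc*((d1:ℝ)+(d2:ℝ)))*((T:ℝ)-(d1:ℝ)-(d2:ℝ)) =
            cc*(((d1:ℝ)+(d2:ℝ))-(n:ℝ))^2 := by
          linear_combination (-((d1:ℝ)+(d2:ℝ)-(n:ℝ))) * hcceq
        nlinarith [mul_nonneg hcc (sq_nonneg ((d1:ℝ)+(d2:ℝ)-(n:ℝ))),
          mul_nonneg (sub_nonneg.2 hd2c) hσ]
      show cc*w'.1 + (1+cc)*w'.2 ≤ _
      have e1 : 0 ≤ cc*((d1:ℝ)*((T:ℝ)-(d1:ℝ)-(d2:ℝ))*Real.logb 2 q - w'.1) :=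
        mul_nonneg hcc (by linarith)
      have e2 : 0 ≤ (1+cc)*((d2:ℝ)*((T:ℝ)-(d1:ℝ)-(d2:ℝ))*Real.logb 2 q - w'.2) :=
        mul_nonneg (by linarith) (by linarith)
      have h3 := mul_le_mul_of_nonneg_right hkey hL
      have h4 : (((m2:ℝ)+cc*(n:ℝ))*((T:ℝ)-(n:ℝ)))*Real.logb 2 q = ((m2:ℝ)+cc*(n:ℝ))*F := by
        rw [hFdef]; ring
      nlinarith [e1, e2, h3, h4]
    -- apply the clipping lemma
    have hclip := clip ((n:ℝ)*F) _ hcol hp3'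
    refine convexHull_min ?_ hstarconv hclip
    rintro z (⟨hzU, hzc⟩ | ⟨hzH, hzl⟩)
    · -- z in a rectangle, below the line
      simp only [Set.mem_setOf_eq] at hzc
      simp only [Set.mem_iUnion] at hzU
      obtain ⟨d1, hd1, d2, hd2, hzr⟩ := hzU
      by_cases hdn : d1 + d2 ≤ n
      · unfold rateRegionStar
        apply subset_convexHull
        simp only [Set.mem_iUnion]
        exact ⟨d1, d2, by omega, by omega, by omega, hzr⟩
      · push_neg at hdn
        obtain ⟨hz1, hz2, hz3, hz4⟩ := hzr
        unfold rate1 at hz2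
        unfold rate2 at hz4
        have hd1c : (d1:ℝ) ≤ (m1:ℝ) := by exact_mod_cast hd1
        have hd2c : (d2:ℝ) ≤ (m2:ℝ) := by exact_mod_cast hd2
        have hsn : (n:ℝ) ≤ (d1:ℝ)+(d2:ℝ) := by exact_mod_cast le_of_lt hdn
        -- pentagon with X = min d1 n * F, Y = min d2 n * F
        have hxX : z.1 ≤ ((min d1 n : ℕ):ℝ)*F := by
          rcases le_or_gt d1 n with h | h
          · rw [min_eq_left h]
            have h5 : (d1:ℝ)*((T:ℝ)-(d1:ℝ)-(d2:ℝ)) ≤ (d1:ℝ)*((T:ℝ)-(n:ℝ)) :=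
              mul_le_mul_of_nonneg_left (by linarith) (Nat.cast_nonneg d1)
            have h6 := mul_le_mul_of_nonneg_right h5 hL
            rw [hFdef]
            nlinarith [hz2, h6]
          · rw [min_eq_right (le_of_lt h)]
            linarith
        have hyY : z.2 ≤ ((min d2 n : ℕ):ℝ)*F := by
          rcases le_or_gt d2 n with h | h
          · rw [min_eq_left h]
            have h5 : (d2:ℝ)*((T:ℝ)-(d1:ℝ)-(d2:ℝ)) ≤ (d2:ℝ)*((T:ℝ)-(n:ℝ)) :=
              mul_le_mul_of_nonneg_left (by linarith) (Nat.cast_nonneg d2)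
            have h6 := mul_le_mul_of_nonneg_right h5 hL
            rw [hFdef]
            nlinarith [hz4, h6]
          · rw [min_eq_right (le_of_lt h)]
            linarith
        have hXY : (n:ℝ)*F ≤ ((min d1 n : ℕ):ℝ)*F + ((min d2 n : ℕ):ℝ)*F := by
          have hn' : (n:ℝ) ≤ ((min d1 n : ℕ):ℝ) + ((min d2 n : ℕ):ℝ) := by
            exact_mod_cast (by omega : n ≤ min d1 n + min d2 n)
          nlinarith [hF, hn']
        have hsub1 : ((n - min d1 n : ℕ):ℝ) = (n:ℝ) - ((min d1 n : ℕ):ℝ) := by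
          exact_mod_cast Nat.cast_sub (min_le_right d1 n)
        have hsub2 : ((n - min d2 n : ℕ):ℝ) = (n:ℝ) - ((min d2 n : ℕ):ℝ) := by
          exact_mod_cast Nat.cast_sub (min_le_right d2 n)
        refine pentagon_mem hstarconv ?_ ?_ ?_ ?_ ?_ hXY hz1 hz3 hxX hyY hzc
        · exact hcorner (min d1 n) (n - min d1 n) (by omega) (by omega) (by omega)
            0 0 le_rfl (by positivity) le_rfl (by positivity)
        · exact hcorner (min d1 n) (n - min d1 n) (by omega) (by omega) (by omega)
            _ 0 (by positivity) le_rfl le_rfl (by positivity)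
        · exact hcorner (n - min d2 n) (min d2 n) (by omega) (by omega) (by omega)
            0 _ le_rfl (by positivity) (by positivity) le_rfl
        · refine hcorner (min d1 n) (n - min d1 n) (by omega) (by omega) (by omega)
            _ _ (by positivity) le_rfl ?_ ?_
          · nlinarith [hF, (by exact_mod_cast min_le_right d1 n : ((min d1 n:ℕ):ℝ) ≤ (n:ℝ))]
          · rw [hsub1]; nlinarith [hF]
        · refine hcorner (n - min d2 n) (min d2 n) (by omega) (by omega) (by omega)
            _ _ ?_ ?_ (by positivity) le_rfl
          · nlinarith [hF, (by exact_mod_cast min_le_right d2 n : ((min d2 n:ℕ):ℝ) ≤ (n:ℝ))]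
          · rw [hsub2]; nlinarith [hF]
    · -- z on the line
      simp only [Set.mem_setOf_eq] at hzl
      obtain ⟨hz1, hz3⟩ := hnn z hzH
      have hxX : z.1 ≤ ((min n m1 : ℕ):ℝ)*F := by
        rcases le_or_gt n m1 with h | h
        · rw [min_eq_left h]; linarith
        · rw [min_eq_right (le_of_lt h)]
          set cc := (m1:ℝ)/((T:ℝ)-2*(n:ℝ)) with hccdef
          have hcc0 : 0 ≤ cc := div_nonneg (by linarith) (le_of_lt hT2n)
          have hcceq : cc*((T:ℝ)-2*(n:ℝ)) = (m1:ℝ) := div_mul_cancel₀ _ (ne_of_gt hT2n)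
          have hv := hV1 cc hcc0 hcceq z hzH
          nlinarith [hv, hzl]
      have hyY : z.2 ≤ ((min n m2 : ℕ):ℝ)*F := by
        rcases le_or_gt n m2 with h | h
        · rw [min_eq_left h]; linarith
        · rw [min_eq_right (le_of_lt h)]
          set cc := (m2:ℝ)/((T:ℝ)-2*(n:ℝ)) with hccdef
          have hcc0 : 0 ≤ cc := div_nonneg (by linarith) (le_of_lt hT2n)
          have hcceq : cc*((T:ℝ)-2*(n:ℝ)) = (m2:ℝ) := div_mul_cancel₀ _ (ne_of_gt hT2n)
          have hv := hV2 cc hcc0 hcceq z hzH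
          nlinarith [hv, hzl]
      have hXY : (n:ℝ)*F ≤ ((min n m1 : ℕ):ℝ)*F + ((min n m2 : ℕ):ℝ)*F := by
        have hn' : (n:ℝ) ≤ ((min n m1 : ℕ):ℝ) + ((min n m2 : ℕ):ℝ) := by
          exact_mod_cast (by omega : n ≤ min n m1 + min n m2)
        nlinarith [hF, hn']
      have hsub1 : ((n - min n m1 : ℕ):ℝ) = (n:ℝ) - ((min n m1 : ℕ):ℝ) := by
        exact_mod_cast Nat.cast_sub (min_le_left n m1)
      have hsub2 : ((n - min n m2 : ℕ):ℝ) = (n:ℝ) - ((min n m2 : ℕ):ℝ) := by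
        exact_mod_cast Nat.cast_sub (min_le_left n m2)
      refine pentagon_mem hstarconv ?_ ?_ ?_ ?_ ?_ hXY hz1 hz3 hxX hyY (le_of_eq hzl)
      · exact hcorner (min n m1) (n - min n m1) (by omega) (by omega) (by omega)
          0 0 le_rfl (by positivity) le_rfl (by positivity)
      · exact hcorner (min n m1) (n - min n m1) (by omega) (by omega) (by omega)
          _ 0 (by positivity) le_rfl le_rfl (by positivity)
      · exact hcorner (n - min n m2) (min n m2) (by omega) (by omega) (by omega)
          0 _ le_rfl (by positivity) (by positivity) le_rfl
      · refine hcorner (min n m1) (n - min n m1) (by omega) (by omega) (by omega)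
          _ _ (by positivity) le_rfl ?_ ?_
        · nlinarith [hF, (by exact_mod_cast min_le_left n m1 : ((min n m1:ℕ):ℝ) ≤ (n:ℝ))]
        · rw [hsub1]; nlinarith [hF]
      · refine hcorner (n - min n m2) (min n m2) (by omega) (by omega) (by omega)
          _ _ ?_ ?_ (by positivity) le_rfl
        · nlinarith [hF, (by exact_mod_cast min_le_left n m2 : ((min n m2:ℕ):ℝ) ≤ (n:ℝ))]
        · rw [hsub2]; nlinarith [hF]
end

section
/- Let F be a finite field with q elements, T a positive integer, and let π1 be a fixed F-linear subspace of F^T of dimension d1. For integers d2 ≤ T and d12 with 0 ≤ d12 ≤ min(d1,d2), the number of d2-dimensional subspaces π2 of F^T with dim(π1 ∩ π2) = d12 equals q^{(d1−d12)(d2−d12)} · |Gr_F(d1, d12)| · |Gr_F(T−d1, d2−d12)|. In particular this number depends on π1 only through its dimension d1. -/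
/-!
Fix a complement `C` of `π1` and sort the subspaces `π2` by `U = π1 ⊓ π2`, which ranges over
the `d12`-dimensional subspaces of `π1`. For fixed `U`, the map `F^T → C × π1 ⧸ U` (projection
to `C` along `π1`, paired with the class of the `π1`-component) is surjective with kernel `U`,
so it identifies the `π2 ⊇ U` with `π1 ⊓ π2 = U` with the subspaces of `C × π1 ⧸ U` meeting
`0 × π1 ⧸ U` trivially. These are exactly the graphs of linear maps `V → π1 ⧸ U` with `V ≤ C`:
`|Gr(T - d1, d2 - d12)|` choices of `V`, and `q ^ ((d2 - d12) * (d1 - d12))` maps for each.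
-/

open Finset

open Module Submodule

theorem Nat.card_sigma_eq_mul {ι : Type*} [Finite ι] {β : ι → Type*} [∀ i, Finite (β i)]
    {k : ℕ} (h : ∀ i, Nat.card (β i) = k) : Nat.card (Σ i, β i) = Nat.card ι * k := by
  have := Fintype.ofFinite ι
  simp only [Nat.card_sigma, h, Finset.sum_const, Finset.card_univ, smul_eq_mul,
    Nat.card_eq_fintype_card]

instance Submodule.finite_of_finite_field (K V : Type*) [Field K] [Finite K] [AddCommGroup V]
    [Module K V] [Module.Finite K V] : Finite (Submodule K V) :=
  have := Module.finite_of_finite K (M := V)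
  Finite.of_injective _ SetLike.coe_injective

section Transfer

variable {K E M : Type*} [Field K] [AddCommGroup E] [Module K E] [AddCommGroup M] [Module K M]

theorem Submodule.finrank_map_add_finrank_inf_ker [FiniteDimensional K E] (f : E →ₗ[K] M)
    (S : Submodule K E) :
    finrank K (S.map f) + finrank K ↥(S ⊓ LinearMap.ker f) = finrank K S := by
  have h := LinearMap.finrank_range_add_finrank_ker (f ∘ₗ S.subtype)
  rwa [LinearMap.range_comp, range_subtype, LinearMap.ker_comp, ← finrank_map_subtype_eq,
    map_comap_subtype] at h

theorem Submodule.inf_eq_ker_iff_disjoint_map {f : E →ₗ[K] M} (hf : Function.Surjective f)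
    {S T : Submodule K E} (hS : LinearMap.ker f ≤ S) (hT : LinearMap.ker f ≤ T) :
    S ⊓ T = LinearMap.ker f ↔ Disjoint (S.map f) (T.map f) := by
  rw [disjoint_iff, ← (comap_injective_of_surjective hf).eq_iff, comap_inf, comap_map_eq,
    comap_map_eq, comap_bot, sup_eq_left.2 hS, sup_eq_left.2 hT]

theorem Submodule.natCard_inf_eq_ker_eq_natCard_disjoint_map [FiniteDimensional K E]
    {f : E →ₗ[K] M} (hf : Function.Surjective f) {S : Submodule K E}
    (hS : LinearMap.ker f ≤ S) (d : ℕ) :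
    Nat.card {T : Submodule K E // S ⊓ T = LinearMap.ker f ∧ finrank K T = d} =
      Nat.card {G : Submodule K M //
        Disjoint (S.map f) G ∧ finrank K G + finrank K (LinearMap.ker f) = d} := by
  have hrank (T : Submodule K E) (hT : LinearMap.ker f ≤ T) :
      finrank K (T.map f) + finrank K (LinearMap.ker f) = finrank K T := by
    rw [← T.finrank_map_add_finrank_inf_ker f, inf_eq_right.2 hT]
  refine Nat.card_congr
    { toFun T := ⟨T.1.map f, ?_⟩
      invFun G := ⟨G.1.comap f, ?_⟩
      left_inv T := Subtype.ext (comap_map_eq_self (T.2.1.ge.trans inf_le_right))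
      right_inv G := Subtype.ext (map_comap_eq_of_surjective hf G.1) }
  · obtain ⟨T, hST, hd⟩ := T
    have hT : LinearMap.ker f ≤ T := hST.ge.trans inf_le_right
    exact ⟨(inf_eq_ker_iff_disjoint_map hf hS hT).1 hST, hd ▸ hrank T hT⟩
  · obtain ⟨G, hSG, hd⟩ := G
    have hG : LinearMap.ker f ≤ G.comap f := LinearMap.ker_le_comap f
    rw [← map_comap_eq_of_surjective hf G] at hSG hd
    exact ⟨(inf_eq_ker_iff_disjoint_map hf hS hG).2 hSG, (hrank _ hG).symm.trans hd⟩

theorem Submodule.exists_surjective_ker_eq_map_eq_ker_fst {A C U : Submodule K E}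
    (hAC : IsCompl A C) (hU : U ≤ A) :
    ∃ φ : E →ₗ[K] C × (A ⧸ U.comap A.subtype), Function.Surjective φ ∧
      LinearMap.ker φ = U ∧ A.map φ = LinearMap.ker (LinearMap.fst K C _) := by
  refine ⟨(C.projectionOnto A hAC.symm).prod ((U.comap A.subtype).mkQ ∘ₗ
    A.projectionOnto C hAC), ?_, ?_, ?_⟩
  · rintro ⟨c, q⟩
    obtain ⟨a, rfl⟩ := (U.comap A.subtype).mkQ_surjective q
    refine ⟨c + a, ?_⟩
    simp [projectionOnto_apply_of_mem_right, projectionOnto_apply_of_mem_left]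
  · ext x
    simp only [LinearMap.ker_prod, ker_projectionOnto, mem_inf, LinearMap.mem_ker,
      LinearMap.coe_comp, Function.comp_apply, mkQ_apply, Quotient.mk_eq_zero, mem_comap,
      subtype_apply, coe_projectionOnto_apply]
    constructor
    · rintro ⟨hx, h⟩
      rwa [projection_apply_of_mem_left hAC hx] at h
    · intro hx
      exact ⟨hU hx, by rwa [projection_apply_of_mem_left hAC (hU hx)]⟩
  · ext ⟨c, q⟩
    simp only [mem_map, LinearMap.prod_apply, LinearMap.coe_comp, Function.prod_apply,
      Function.comp_apply, mkQ_apply, Prod.mk.injEq, LinearMap.mem_ker, LinearMap.fst_apply]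
    constructor
    · rintro ⟨y, hy, rfl, -⟩
      exact projectionOnto_apply_of_mem_right hAC.symm hy
    · rintro rfl
      obtain ⟨a, rfl⟩ := (U.comap A.subtype).mkQ_surjective q
      exact ⟨a, a.2, projectionOnto_apply_of_mem_right hAC.symm a.2,
        by rw [projectionOnto_apply_left]; rfl⟩

end Transfer

namespace LinearPMap

variable {K E W : Type*} [Field K] [AddCommGroup E] [Module K E] [AddCommGroup W] [Module K W]

theorem disjoint_ker_fst_iff {G : Submodule K (E × W)} :
    Disjoint (LinearMap.ker (LinearMap.fst K E W)) G ↔ ∀ x ∈ G, x.1 = 0 → x.2 = 0 := by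
  rw [disjoint_comm, Submodule.disjoint_def]
  simp +contextual [Prod.ext_iff]

noncomputable def graphEquiv : (E →ₗ.[K] W) ≃
    {G : Submodule K (E × W) // Disjoint (LinearMap.ker (LinearMap.fst K E W)) G} where
  toFun f := ⟨f.graph, disjoint_ker_fst_iff.2 fun _ hx => f.graph_fst_eq_zero_snd hx⟩
  invFun G := G.1.toLinearPMap
  left_inv f :=
    eq_of_eq_graph (f.graph.toLinearPMap_graph_eq fun _ hx => f.graph_fst_eq_zero_snd hx)
  right_inv G := Subtype.ext (G.1.toLinearPMap_graph_eq (disjoint_ker_fst_iff.1 G.2))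

theorem finrank_graph [FiniteDimensional K E] [FiniteDimensional K W] (f : E →ₗ.[K] W) :
    finrank K f.graph = finrank K f.domain := by
  have h := f.graph.finrank_map_add_finrank_inf_ker (LinearMap.fst K E W)
  have hdisj : Disjoint f.graph (LinearMap.ker (LinearMap.fst K E W)) := (graphEquiv f).2.symm
  rwa [graph_map_fst_eq_domain, hdisj.eq_bot, finrank_bot, add_zero, eq_comm] at h

end LinearPMap

section Counting

variable {F : Type} [Field F] [Fintype F] {V W : Type*} [AddCommGroup V] [Module F V]
  [FiniteDimensional F V] [AddCommGroup W] [Module F W] [FiniteDimensional F W]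

theorem natCard_linearMap :
    Nat.card (V →ₗ[F] W) = Fintype.card F ^ (finrank F V * finrank F W) := by
  rw [Module.natCard_eq_pow_finrank (K := F), finrank_linearMap, Nat.card_eq_fintype_card]

theorem natCard_submodule_finrank_eq_grCard (m : ℕ) :
    Nat.card {U : Submodule F V // finrank F U = m} = grCard F (finrank F V) m := by
  let e : V ≃ₗ[F] (Fin (finrank F V) → F) := LinearEquiv.ofFinrankEq _ _ (by simp)
  exact Nat.card_congr ((orderIsoMapComap e).toEquiv.subtypeEquiv fun U => by
    rw [← LinearEquiv.finrank_map_eq e U]; rfl)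

theorem natCard_submodule_le_finrank_eq_grCard (P : Submodule F V) (m : ℕ) :
    Nat.card {U : Submodule F V // U ≤ P ∧ finrank F U = m} = grCard F (finrank F P) m := by
  rw [← natCard_submodule_finrank_eq_grCard]
  exact Nat.card_congr (((MapSubtype.orderIso P).toEquiv.subtypeEquiv
    (q := fun U => finrank F U.1 = m) fun U => by rw [← finrank_map_subtype_eq P U]; rfl).trans
      (Equiv.subtypeSubtypeEquivSubtypeInter (· ≤ P) (finrank F · = m))).symm

theorem natCard_linearPMap_finrank_domain_eq (k : ℕ) :
    Nat.card {f : V →ₗ.[F] W // finrank F f.domain = k} =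
      grCard F (finrank F V) k * Fintype.card F ^ (k * finrank F W) := by
  have : ∀ P : Submodule F V, Finite (P →ₗ[F] W) := fun _ => Module.finite_of_finite F
  let e : {f : V →ₗ.[F] W // finrank F f.domain = k} ≃
      Σ P : {P : Submodule F V // finrank F P = k}, (P.1 →ₗ[F] W) :=
    { toFun f := ⟨⟨f.1.domain, f.2⟩, f.1.toFun⟩
      invFun p := ⟨⟨p.1.1, p.2⟩, p.1.2⟩
      left_inv _ := rfl
      right_inv _ := rfl }
  rw [Nat.card_congr e, Nat.card_sigma_eq_mul fun P => natCard_linearMap.trans (by rw [P.2]),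
    natCard_submodule_finrank_eq_grCard]

theorem natCard_disjoint_ker_fst_finrank_eq (k : ℕ) :
    Nat.card {G : Submodule F (V × W) //
        Disjoint (LinearMap.ker (LinearMap.fst F V W)) G ∧ finrank F G = k} =
      grCard F (finrank F V) k * Fintype.card F ^ (k * finrank F W) := by
  rw [← natCard_linearPMap_finrank_domain_eq]
  exact Nat.card_congr (((LinearPMap.graphEquiv.subtypeEquiv
    (q := fun G => finrank F G.1 = k) fun f => by
      rw [← LinearPMap.finrank_graph]; rfl).trans
    (Equiv.subtypeSubtypeEquivSubtypeInter _ fun G : Submodule F (V × W) => finrank F G = k)).symm)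

theorem natCard_inf_eq_finrank_eq {A C U : Submodule F V} (hAC : IsCompl A C) (hU : U ≤ A)
    {d : ℕ} (hd : finrank F U ≤ d) :
    Nat.card {T : Submodule F V // A ⊓ T = U ∧ finrank F T = d} =
      grCard F (finrank F C) (d - finrank F U) *
        Fintype.card F ^ ((d - finrank F U) * (finrank F A - finrank F U)) := by
  obtain ⟨φ, hφ, hker, hmap⟩ := exists_surjective_ker_eq_map_eq_ker_fst hAC hU
  have hQ : finrank F (A ⧸ U.comap A.subtype) = finrank F A - finrank F U := by
    have h := (U.comap A.subtype).finrank_quotient_add_finrank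
    rw [← finrank_map_subtype_eq, map_comap_subtype, inf_of_le_right hU] at h
    omega
  have h := natCard_inf_eq_ker_eq_natCard_disjoint_map hφ (hker ▸ hU) d
  rw [hker, hmap] at h
  rw [h, ← hQ, ← natCard_disjoint_ker_fst_finrank_eq]
  exact Nat.card_congr (Equiv.subtypeEquivRight fun G => and_congr_right fun _ => by omega)

theorem natCard_finrank_eq_finrank_inf_eq {A C : Submodule F V} (hAC : IsCompl A C) {d e : ℕ}
    (he : e ≤ d) :
    Nat.card {T : Submodule F V // finrank F T = d ∧ finrank F ↥(A ⊓ T) = e} =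
      grCard F (finrank F A) e *
        (grCard F (finrank F C) (d - e) * Fintype.card F ^ ((d - e) * (finrank F A - e))) := by
  let σ : {T : Submodule F V // finrank F T = d ∧ finrank F ↥(A ⊓ T) = e} ≃
      Σ U : {U : Submodule F V // U ≤ A ∧ finrank F U = e},
        {T : Submodule F V // A ⊓ T = U.1 ∧ finrank F T = d} :=
    { toFun T := ⟨⟨A ⊓ T.1, inf_le_left, T.2.2⟩, ⟨T.1, rfl, T.2.1⟩⟩
      invFun p := ⟨p.2.1, p.2.2.2, by rw [p.2.2.1]; exact p.1.2.2⟩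
      left_inv _ := rfl
      right_inv p := Sigma.subtype_ext (Subtype.ext p.2.2.1) rfl }
  have hfibre (U : {U : Submodule F V // U ≤ A ∧ finrank F U = e}) :
      Nat.card {T : Submodule F V // A ⊓ T = U.1 ∧ finrank F T = d} =
        grCard F (finrank F C) (d - e) * Fintype.card F ^ ((d - e) * (finrank F A - e)) := by
    obtain ⟨U, hUA, rfl⟩ := U
    exact natCard_inf_eq_finrank_eq hAC hUA he
  rw [Nat.card_congr σ, Nat.card_sigma_eq_mul hfibre, natCard_submodule_le_finrank_eq_grCard]

end Counting

theorem card_subspaces_with_intersection_general (F : Type) [Field F] [Fintype F] (T : ℕ)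
    (d1 d2 d12 : ℕ) (h12 : d12 ≤ min d1 d2)
    (π1 : Submodule F (Fin T → F)) (hπ1 : Module.finrank F ↥π1 = d1) :
    Nat.card {π2 : Submodule F (Fin T → F) //
        Module.finrank F ↥π2 = d2 ∧ Module.finrank F ↥(π1 ⊓ π2) = d12} =
      Fintype.card F ^ ((d1 - d12) * (d2 - d12)) * grCard F d1 d12 *
        grCard F (T - d1) (d2 - d12) := by
  obtain ⟨C, hC⟩ := Submodule.exists_isCompl π1
  have hC_rank : finrank F C = T - d1 := by
    have h := finrank_add_eq_of_isCompl hC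
    rw [hπ1, finrank_fin_fun] at h
    omega
  rw [natCard_finrank_eq_finrank_inf_eq hC (h12.trans (min_le_right _ _)), hπ1, hC_rank]
  ring

/-- For a fixed `d1`-dimensional subspace `π1` of `F^T`, the number of `d2`-dimensional
subspaces `π2` with `dim(π1 ∩ π2) = d12` equals
`q^{(d1−d12)(d2−d12)} · |Gr_F(d1, d12)| · |Gr_F(T−d1, d2−d12)|`. -/
theorem card_subspaces_with_intersection (F : Type) [Field F] [Fintype F] (T : ℕ) (hT : 0 < T)
    (d1 d2 d12 : ℕ) (h2T : d2 ≤ T) (h12 : d12 ≤ min d1 d2)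
    (π1 : Submodule F (Fin T → F)) (hπ1 : Module.finrank F ↥π1 = d1) :
    Nat.card {π2 : Submodule F (Fin T → F) //
        Module.finrank F ↥π2 = d2 ∧ Module.finrank F ↥(π1 ⊓ π2) = d12} =
      Fintype.card F ^ ((d1 - d12) * (d2 - d12)) * grCard F d1 d12 *
        grCard F (T - d1) (d2 - d12) :=
  card_subspaces_with_intersection_general F T d1 d2 d12 h12 π1 hπ1
end

section
/- Let F be a finite field with q elements, T a positive integer, and let π1, π2 be F-linear subspaces of F^T with d1 = dim(π1), d2 = dim(π2), and d12 = dim(π1 ∩ π2). Then the number of d2-dimensional subspaces π2' of F^T satisfying π1 + π2' = π1 + π2 equals q^{(d1−d12)(d2−d12)} · |Gr_F(d1, d12)|; in particular, this cardinality depends only on the dimensions d1, d2, d12. -/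
open Finset

/-!
Put `S = π1 + π2`; the subspaces to count are the `d2`-dimensional `W ≤ S` with `π1 + W = S`.
Sort them by `U = π1 ∩ W`, which ranges over the `d12`-dimensional subspaces of `π1`. For fixed
`U`, passing to `S / U` turns the conditions `π1 + W = S`, `π1 ∩ W = U` into "`W / U` is a
complement of `π1 / U`". The complements of a subspace `p` of `E` correspond to the linear maps
from one fixed complement to `p`, so there are `q ^ (dim p * (dim E - dim p))` of them, here
`q ^ ((d1 - d12) * (d2 - d12))` for every `U`.
-/

open Module

theorem Nat.card_eq_mul_card_of_card_fiber_eq {α β : Type*} [Finite α] [Finite β] (f : α → β)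
    {c : ℕ} (hc : ∀ b, Nat.card {a // f a = b} = c) : Nat.card α = c * Nat.card β := by
  have := Fintype.ofFinite β
  rw [Nat.card_congr (Equiv.sigmaFiberEquiv f).symm, Nat.card_sigma,
    Finset.sum_congr rfl fun b _ => hc b, Finset.sum_const, Finset.card_univ, smul_eq_mul,
    Nat.card_eq_fintype_card, mul_comm]

namespace Submodule

section Semiring

variable {R V : Type*} [Semiring R] [AddCommMonoid V] [Module R V]

instance finite_of_finite [Finite V] : Finite (Submodule R V) :=
  Finite.of_injective _ SetLike.coe_injective

theorem natCard_finrank_eq_congr {V' : Type*} [AddCommMonoid V'] [Module R V'] (e : V ≃ₗ[R] V')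
    (d : ℕ) :
    Nat.card {W : Submodule R V // finrank R W = d} =
      Nat.card {W : Submodule R V' // finrank R W = d} :=
  Nat.card_congr <| (orderIsoMapComap e).toEquiv.subtypeEquiv fun W => by
    rw [OrderIso.coe_toEquiv, orderIsoMapComap_apply, LinearEquiv.finrank_map_eq]

theorem natCard_le_and (S : Submodule R V) (r : Submodule R V → Prop) :
    Nat.card {W // W ≤ S ∧ r W} = Nat.card {W : Submodule R S // r (W.map S.subtype)} :=
  Nat.card_congr <| (Equiv.subtypeSubtypeEquivSubtypeInter (· ≤ S) r).symm.trans <|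
    S.mapIic.symm.toEquiv.subtypeEquiv fun W => by
      rw [OrderIso.coe_toEquiv, ← coe_mapIic_apply, OrderIso.apply_symm_apply]

theorem sup_map_subtype_eq_iff {P S : Submodule R V} (hPS : P ≤ S) (W : Submodule R S) :
    P ⊔ W.map S.subtype = S ↔ P.comap S.subtype ⊔ W = ⊤ := by
  rw [← (map_injective_of_injective S.injective_subtype).eq_iff, map_sup, map_comap_subtype,
    inf_eq_right.mpr hPS, map_top, range_subtype]

theorem natCard_finrank_eq_sup_eq {P S : Submodule R V} (hPS : P ≤ S) (d : ℕ) :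
    Nat.card {W : Submodule R V // finrank R W = d ∧ P ⊔ W = S} =
      Nat.card {W : Submodule R S // finrank R W = d ∧ P.comap S.subtype ⊔ W = ⊤} := by
  calc Nat.card {W : Submodule R V // finrank R W = d ∧ P ⊔ W = S}
      = Nat.card {W // W ≤ S ∧ finrank R W = d ∧ P ⊔ W = S} :=
        Nat.card_congr <| Equiv.subtypeEquivRight fun W =>
          ⟨fun h => ⟨h.2 ▸ le_sup_right, h⟩, And.right⟩
    _ = _ := by rw [natCard_le_and]; simp only [finrank_map_subtype_eq, sup_map_subtype_eq_iff hPS]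

end Semiring

section Ring

variable {R V : Type*} [Ring R] [AddCommGroup V] [Module R V]

/-- A complement of `p` is the kernel of a projection onto `p`, and such a projection is
determined by its restriction to a fixed complement `q₀`. -/
noncomputable def isComplEquivLinearMap {p q₀ : Submodule R V} (h : IsCompl p q₀) :
    {q // IsCompl p q} ≃ (q₀ →ₗ[R] p) :=
  p.isComplEquivProj.trans
  { toFun f := (f : V →ₗ[R] p) ∘ₗ q₀.subtype
    invFun g := ⟨LinearMap.ofIsCompl h LinearMap.id g, fun x => by simp⟩
    left_inv f := Subtype.ext <| LinearMap.ofIsCompl_eq h (fun u => (f.2 u).symm) fun _ => rfl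
    right_inv g := by ext u; simp }

theorem isCompl_map_mkQ_iff {P U W : Submodule R V} (hUP : U ≤ P) (hUW : U ≤ W) :
    IsCompl (P.map U.mkQ) (W.map U.mkQ) ↔ P ⊔ W = ⊤ ∧ P ⊓ W = U := by
  have hinj := comap_injective_of_surjective U.mkQ_surjective
  rw [isCompl_iff, disjoint_iff, codisjoint_iff, and_comm, ← hinj.eq_iff, ← hinj.eq_iff]
  simp [← map_sup, comap_map_mkQ, sup_eq_right.mpr hUP, sup_eq_right.mpr hUW,
    sup_eq_right.mpr (hUP.trans le_sup_left)]

noncomputable def supEqTopInfEqEquivIsCompl {P U : Submodule R V} (hUP : U ≤ P) :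
    {W // P ⊔ W = ⊤ ∧ P ⊓ W = U} ≃ {q : Submodule R (V ⧸ U) // IsCompl (P.map U.mkQ) q} where
  toFun W := ⟨W.1.map U.mkQ, (isCompl_map_mkQ_iff hUP (W.2.2.ge.trans inf_le_right)).2 W.2⟩
  invFun q := ⟨q.1.comap U.mkQ, by
    rw [← isCompl_map_mkQ_iff hUP (U.ker_mkQ.ge.trans (LinearMap.ker_le_comap _)),
      map_comap_eq_of_surjective U.mkQ_surjective]
    exact q.2⟩
  left_inv W := Subtype.ext <| by
    simp [comap_map_mkQ, sup_eq_right.mpr (W.2.2.ge.trans inf_le_right)]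
  right_inv q := Subtype.ext <| map_comap_eq_of_surjective U.mkQ_surjective q.1

end Ring

section Field

variable {K V : Type*} [Field K] [AddCommGroup V] [Module K V] [FiniteDimensional K V]

theorem finrank_map_mkQ_add_finrank {P U : Submodule K V} (hUP : U ≤ P) :
    finrank K (P.map U.mkQ) + finrank K U = finrank K P := by
  have := LinearMap.finrank_range_add_finrank_ker (U.mkQ.domRestrict P)
  rwa [LinearMap.range_domRestrict, LinearMap.ker_domRestrict, ker_mkQ,
    (comapSubtypeEquivOfLe hUP).finrank_eq] at this

theorem natCard_isCompl (p : Submodule K V) :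
    Nat.card {q // IsCompl p q} = Nat.card K ^ (finrank K p * (finrank K V - finrank K p)) := by
  obtain ⟨q₀, h⟩ := p.exists_isCompl
  rw [Nat.card_congr (isComplEquivLinearMap h), natCard_eq_pow_finrank (K := K),
    finrank_linearMap, ← finrank_add_eq_of_isCompl h, Nat.add_sub_cancel_left, mul_comm]

theorem natCard_sup_eq_top_inf_eq {P U : Submodule K V} (hUP : U ≤ P) :
    Nat.card {W : Submodule K V // P ⊔ W = ⊤ ∧ P ⊓ W = U} =
      Nat.card K ^ ((finrank K P - finrank K U) * (finrank K V - finrank K P)) := by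
  rw [Nat.card_congr (supEqTopInfEqEquivIsCompl hUP), natCard_isCompl]
  have hP := finrank_map_mkQ_add_finrank hUP
  have hV := U.finrank_quotient_add_finrank
  congr 2 <;> omega

theorem natCard_finrank_eq_sup_eq_top [Finite K] (P : Submodule K V) {d k : ℕ}
    (hdk : finrank K P + d = finrank K V + k) :
    Nat.card {W : Submodule K V // finrank K W = d ∧ P ⊔ W = ⊤} =
      Nat.card K ^ ((finrank K P - k) * (finrank K V - finrank K P)) *
        Nat.card {U // U ≤ P ∧ finrank K U = k} := by
  have : Finite V := Module.finite_of_finite K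
  have finrank_inf (W : Submodule K V) (hW : P ⊔ W = ⊤) :
      finrank K ↥(P ⊓ W) + finrank K V = finrank K P + finrank K W := by
    rw [← finrank_top K V, ← hW, add_comm, finrank_sup_add_finrank_inf_eq]
  refine Nat.card_eq_mul_card_of_card_fiber_eq
    (fun W => ⟨P ⊓ W.1, inf_le_left, by have := finrank_inf _ W.2.2; omega⟩) fun U => ?_
  obtain ⟨U, hUP, rfl⟩ := U
  rw [← natCard_sup_eq_top_inf_eq hUP]
  simp only [Subtype.mk.injEq]
  refine Nat.card_congr <| (Equiv.subtypeSubtypeEquivSubtypeInter _ (P ⊓ · = U)).trans <|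
    Equiv.subtypeEquivRight fun W => ⟨fun h => ⟨h.1.2, h.2⟩, fun h => ⟨⟨?_, h.1⟩, h.2⟩⟩
  have := finrank_inf W h.1
  rw [h.2] at this
  omega

end Field

end Submodule

theorem card_subspaces_with_same_sum_general (F : Type) [Field F] [Fintype F] (T : ℕ)
    (π1 π2 : Submodule F (Fin T → F)) (d1 d2 d12 : ℕ)
    (hd1 : Module.finrank F ↥π1 = d1) (hd2 : Module.finrank F ↥π2 = d2)
    (hd12 : Module.finrank F ↥(π1 ⊓ π2) = d12) :
    Nat.card {π2' : Submodule F (Fin T → F) //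
        Module.finrank F ↥π2' = d2 ∧ π1 ⊔ π2' = π1 ⊔ π2} =
      Fintype.card F ^ ((d1 - d12) * (d2 - d12)) * grCard F d1 d12 := by
  set S := π1 ⊔ π2
  have hS : finrank F S + d12 = d1 + d2 :=
    hd1 ▸ hd2 ▸ hd12 ▸ Submodule.finrank_sup_add_finrank_inf_eq π1 π2
  set P := π1.comap S.subtype
  let e : P ≃ₗ[F] (Fin d1 → F) :=
    (Submodule.comapSubtypeEquivOfLe le_sup_left).trans (finBasisOfFinrankEq F π1 hd1).equivFun
  have hP : finrank F P = d1 := e.finrank_eq.trans (finrank_fin_fun F)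
  rw [Submodule.natCard_finrank_eq_sup_eq le_sup_left,
    Submodule.natCard_finrank_eq_sup_eq_top P (k := d12) (by omega), Submodule.natCard_le_and]
  simp only [Submodule.finrank_map_subtype_eq]
  rw [grCard, ← Submodule.natCard_finrank_eq_congr e, hP, Nat.card_eq_fintype_card]
  congr 3
  omega

/-- For subspaces `π1, π2` of `F^T` with `d1 = dim π1`, `d2 = dim π2`, `d12 = dim(π1 ∩ π2)`,
the number of `d2`-dimensional subspaces `π2'` with `π1 + π2' = π1 + π2` equals
`q^{(d1−d12)(d2−d12)} · |Gr_F(d1, d12)|`; in particular it depends only on `d1, d2, d12`. -/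
theorem card_subspaces_with_same_sum (F : Type) [Field F] [Fintype F] (T : ℕ) (hT : 0 < T)
    (π1 π2 : Submodule F (Fin T → F)) (d1 d2 d12 : ℕ)
    (hd1 : Module.finrank F ↥π1 = d1) (hd2 : Module.finrank F ↥π2 = d2)
    (hd12 : Module.finrank F ↥(π1 ⊓ π2) = d12) :
    Nat.card {π2' : Submodule F (Fin T → F) //
        Module.finrank F ↥π2' = d2 ∧ π1 ⊔ π2' = π1 ⊔ π2} =
      Fintype.card F ^ ((d1 - d12) * (d2 - d12)) * grCard F d1 d12 :=
  card_subspaces_with_same_sum_general F T π1 π2 d1 d2 d12 hd1 hd2 hd12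
end
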